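/- arXiv:2201.05779 — 5 statements merged into one kernel-verified Lean document; each statement's English description precedes it below -/
import Mathlib

section
/- Fix λ₁,λ₂ ∈ [0,1], ω ∈ ℝ, z ∈ ℂ, and a positive integer n. Then there exists a polynomial p ∈ ℂ[X,Y] of total degree at most n (with coefficients depending on λ₁, λ₂, ω, z, n) such that for all θ ∈ ℝ, P_{[1,2n],z}(θ) = p( cos(2πθ), sin(2πθ) ). -/
open Complex Filter ComplexConjugate
noncomputable section

/-- Distance to the nearest integer, `‖x‖_𝕋`. -/
def torusNorm (x : ℝ) : ℝ := |x - round x|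

/-- `ω` is Diophantine. -/
def IsDiophantine (ω : ℝ) : Prop :=
  ∃ τ : ℝ, 1 < τ ∧ ∃ ν : ℝ, 0 < ν ∧
    ∀ n : ℤ, n ≠ 0 → ν / |(n : ℝ)| ^ τ ≤ torusNorm (n * ω)

/-- `θ` is non-resonant with respect to `ω`:
`limsup_{|n|→∞} (-ln ‖2θ - 1/2 + nω‖_𝕋)/|n| = 0`. -/
def IsNonResonant (ω θ : ℝ) : Prop :=
  Filter.limsup
    (fun n : ℤ => -Real.log (torusNorm (2 * θ - 1 / 2 + n * ω)) / |(n : ℝ)|)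
    Filter.cofinite = 0

/-- `λ' = √(1 - λ²)`. -/
def lamp (lam : ℝ) : ℝ := Real.sqrt (1 - lam ^ 2)

/-- The quasi-periodic Verblunsky coefficients `α_k` of the unitary almost Mathieu operator:
`α_{2n} = λ₁'`, `α_{2n+1} = λ₂ sin(2π(θ + nω))`. -/
def uamoAlpha (l1 l2 ω θ : ℝ) (k : ℤ) : ℂ :=
  if k % 2 = 0 then ((lamp l1 : ℝ) : ℂ)
  else ((l2 * Real.sin (2 * Real.pi * (θ + (((k - 1) / 2 : ℤ) : ℝ) * ω)) : ℝ) : ℂ)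

/-- The quasi-periodic coefficients `ρ_k` of the unitary almost Mathieu operator:
`ρ_{2n} = λ₁`, `ρ_{2n+1} = λ₂ cos(2π(θ + nω)) + i λ₂'`. -/
def uamoRho (l1 l2 ω θ : ℝ) (k : ℤ) : ℂ :=
  if k % 2 = 0 then ((l1 : ℝ) : ℂ)
  else ((l2 * Real.cos (2 * Real.pi * (θ + (((k - 1) / 2 : ℤ) : ℝ) * ω)) : ℝ) : ℂ)
    + Complex.I * ((lamp l2 : ℝ) : ℂ)

/-- Entries of the doubly infinite block-diagonal matrix `⊕_m Θ_m`, where the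
`2×2` blocks `Θ_m = [[conj α_m, ρ_m],[conj ρ_m, -α_m]]` occupy rows and columns `{m, m+1}`,
and `m` ranges over the integers congruent to `par` modulo 2. -/
def thetaEntry (α ρ : ℤ → ℂ) (par : ℤ) (j k : ℤ) : ℂ :=
  if j % 2 = par % 2 then
    -- `j` is the top row of the block `Θ_j`
    if k = j then conj (α j) else if k = j + 1 then ρ j else 0
  else
    -- `j` is the bottom row of the block `Θ_{j-1}`
    if k = j - 1 then conj (ρ (j - 1)) else if k = j then -α (j - 1) else 0

/-- The matrix `L = ⊕_n Θ_{2n}`. -/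
def Lmat (α ρ : ℤ → ℂ) : ℤ → ℤ → ℂ := thetaEntry α ρ 0

/-- The matrix `M = ⊕_n Θ_{2n+1}`. -/
def Mmat (α ρ : ℤ → ℂ) : ℤ → ℤ → ℂ := thetaEntry α ρ 1

/-- Entries of the extended CMV matrix `W = L · M` (the sum below captures all
nonzero terms of the matrix product since `M` is tridiagonal). -/
def Wmat (α ρ : ℤ → ℂ) (a b : ℤ) : ℂ :=
  ∑ k ∈ Finset.Icc (b - 1) (b + 1), Lmat α ρ a k * Mmat α ρ k b

/-- Restriction `χ_{[a, a+N-1]} A χ_{[a, a+N-1]}` of a doubly infinite matrix,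
as an `N × N` matrix. -/
def restr (A : ℤ → ℤ → ℂ) (a : ℤ) (N : ℕ) : Matrix (Fin N) (Fin N) ℂ :=
  fun i j => A (a + (i : ℤ)) (a + (j : ℤ))

/-- `P_{[a,b],z} = det (z·I - W|_{[a,b]})`. -/
def Pdet (α ρ : ℤ → ℂ) (z : ℂ) (a b : ℤ) : ℂ :=
  Matrix.det
    (z • (1 : Matrix (Fin (b - a + 1).toNat) (Fin (b - a + 1).toNat) ℂ)
      - restr (Wmat α ρ) a (b - a + 1).toNat)

/-- `P_{[a,b],z}(θ)` for the unitary almost Mathieu operator. -/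
def uamoP (l1 l2 ω : ℝ) (z : ℂ) (θ : ℝ) (a b : ℤ) : ℂ :=
  Pdet (uamoAlpha l1 l2 ω θ) (uamoRho l1 l2 ω θ) z a b

/-- The pointwise action of the extended CMV matrix `W` on a sequence (the sum
captures all nonzero terms since `W` has band width `2`). -/
def applyCMV (α ρ : ℤ → ℂ) (ψ : ℤ → ℂ) (y : ℤ) : ℂ :=
  ∑ k ∈ Finset.Icc (y - 2) (y + 2), Wmat α ρ y k * ψ k

open Classical in
/-- The extended CMV operator `W = L·M` as a bounded operator on `ℓ²(ℤ; ℂ)`: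
the unique bounded operator whose matrix entries are `Wmat α ρ` (it exists whenever
`|α_k|² + |ρ_k|² = 1`, in which case `W` is unitary). -/
def CMVop (α ρ : ℤ → ℂ) : lp (fun _ : ℤ => ℂ) 2 →L[ℂ] lp (fun _ : ℤ => ℂ) 2 :=
  if h : ∃ T : lp (fun _ : ℤ => ℂ) 2 →L[ℂ] lp (fun _ : ℤ => ℂ) 2,
      ∀ (f : lp (fun _ : ℤ => ℂ) 2) (y : ℤ), T f y = applyCMV α ρ (⇑f) y
  then h.choose else 0

/-- The Szegő matrix `S_{k,z}`. -/
def SzegoMat (α ρ : ℤ → ℂ) (z : ℂ) (k : ℤ) : Matrix (Fin 2) (Fin 2) ℂ :=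
  (((‖ρ k‖ : ℝ) : ℂ))⁻¹ • !![z, -conj (α k); -(α k) * z, 1]

/-- The Gesztesy–Zinchenko matrix `M_{k,z}`. -/
def GZmat (α ρ : ℤ → ℂ) (z : ℂ) (k : ℤ) : Matrix (Fin 2) (Fin 2) ℂ :=
  (ρ k)⁻¹ • (if k % 2 = 0 then !![-α k, 1; 1, -conj (α k)]
             else !![-conj (α k), z; z⁻¹, -α k])

/-- The transfer matrix `A_{n,z}`. -/
def Amat (α ρ : ℤ → ℂ) (z : ℂ) (n : ℤ) : Matrix (Fin 2) (Fin 2) ℂ :=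
  (ρ (2 * n) * ρ (2 * n - 1))⁻¹ •
    !![z⁻¹ + α (2 * n) * conj (α (2 * n - 1)) + α (2 * n - 1) * conj (α (2 * n - 2))
          + α (2 * n) * conj (α (2 * n - 2)) * z,
        -(conj (ρ (2 * n - 2)) * α (2 * n - 1)) - conj (ρ (2 * n - 2)) * α (2 * n) * z;
        -(ρ (2 * n) * conj (α (2 * n - 1))) - ρ (2 * n) * conj (α (2 * n - 2)) * z,
        ρ (2 * n) * conj (ρ (2 * n - 2)) * z]

/-- The matrix `B_n`. -/
def Bmat (α ρ : ℤ → ℂ) (n : ℤ) : Matrix (Fin 2) (Fin 2) ℂ :=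
  !![1, 0; -conj (α (2 * n)), conj (ρ (2 * n))]

/-- The `k`-step cocycle product `D_k(θ) = D(θ+(k-1)ω) ⋯ D(θ+ω) D(θ)`. -/
def cocycle {d : ℕ} (ω : ℝ) (D : ℝ → Matrix (Fin d) (Fin d) ℂ) : ℕ → ℝ → Matrix (Fin d) (Fin d) ℂ
  | 0, _ => 1
  | (k + 1), θ => D (θ + (k : ℝ) * ω) * cocycle ω D k θ

/-- The Frobenius (Hilbert–Schmidt) norm of a matrix. -/
def matNorm {d : ℕ} (M : Matrix (Fin d) (Fin d) ℂ) : ℝ :=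
  Real.sqrt (∑ i, ∑ j, ‖M i j‖ ^ 2)

/-- The sequence `(1/k) ∫_𝕋 ln ‖D_k(θ)‖ dθ` whose limit is the Lyapunov exponent `L(ω, D)`. -/
def lyapSeq {d : ℕ} (ω : ℝ) (D : ℝ → Matrix (Fin d) (Fin d) ℂ) (k : ℕ) : ℝ :=
  (1 / (k : ℝ)) * ∫ θ in (0 : ℝ)..1, Real.log (matNorm (cocycle ω D k θ))


/-! ### Auxiliary material for Lemma 3.1 -/

namespace UamoAux

open Matrix MvPolynomial

/-- `f` agrees with a polynomial of total degree at most `k` in `cos 2πθ`, `sin 2πθ`. -/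
def Good (k : ℕ) (f : ℝ → ℂ) : Prop :=
  ∃ p : MvPolynomial (Fin 2) ℂ, p.totalDegree ≤ k ∧
    ∀ θ : ℝ, f θ = MvPolynomial.eval
      ![((Real.cos (2 * Real.pi * θ) : ℝ) : ℂ), ((Real.sin (2 * Real.pi * θ) : ℝ) : ℂ)] p

lemma Good.mono {k k' : ℕ} {f : ℝ → ℂ} (hf : Good k f) (h : k ≤ k') : Good k' f := by
  obtain ⟨p, hp, he⟩ := hf
  exact ⟨p, hp.trans h, he⟩

lemma good_const (c : ℂ) : Good 0 (fun _ => c) :=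
  ⟨MvPolynomial.C c, by simp, fun θ => by simp⟩

lemma Good.add {k : ℕ} {f g : ℝ → ℂ} (hf : Good k f) (hg : Good k g) :
    Good k (fun θ => f θ + g θ) := by
  obtain ⟨p, hp, hep⟩ := hf
  obtain ⟨q, hq, heq⟩ := hg
  exact ⟨p + q, (MvPolynomial.totalDegree_add p q).trans (max_le hp hq),
    fun θ => by show f θ + g θ = _; rw [hep θ, heq θ, map_add]⟩

lemma Good.mul {k l : ℕ} {f g : ℝ → ℂ} (hf : Good k f) (hg : Good l g) :
    Good (k + l) (fun θ => f θ * g θ) := by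
  obtain ⟨p, hp, hep⟩ := hf
  obtain ⟨q, hq, heq⟩ := hg
  exact ⟨p * q, (MvPolynomial.totalDegree_mul p q).trans (add_le_add hp hq),
    fun θ => by show f θ * g θ = _; rw [hep θ, heq θ, _root_.map_mul]⟩

lemma Good.const_mul {k : ℕ} {f : ℝ → ℂ} (hf : Good k f) (a : ℂ) :
    Good k (fun θ => a * f θ) := by
  obtain ⟨p, hp, hep⟩ := hf
  refine ⟨MvPolynomial.C a * p, ?_, fun θ => by
    show a * f θ = _; rw [hep θ, _root_.map_mul, MvPolynomial.eval_C]⟩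
  refine (MvPolynomial.totalDegree_mul _ _).trans ?_
  simpa [MvPolynomial.totalDegree_C] using hp

lemma good_cos (c : ℝ) : Good 1 (fun θ => ((Real.cos (2 * Real.pi * (θ + c)) : ℝ) : ℂ)) := by
  refine ⟨MvPolynomial.C ((Real.cos (2 * Real.pi * c) : ℝ) : ℂ) * MvPolynomial.X 0
      + MvPolynomial.C ((-Real.sin (2 * Real.pi * c) : ℝ) : ℂ) * MvPolynomial.X 1, ?_, ?_⟩
  · refine le_trans (MvPolynomial.totalDegree_add _ _) (max_le ?_ ?_) <;>
      refine le_trans (MvPolynomial.totalDegree_mul _ _) ?_ <;>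
      simp [MvPolynomial.totalDegree_C, MvPolynomial.totalDegree_X]
  · intro θ
    have h : Real.cos (2 * Real.pi * (θ + c))
        = Real.cos (2 * Real.pi * θ) * Real.cos (2 * Real.pi * c)
          + Real.sin (2 * Real.pi * θ) * (-Real.sin (2 * Real.pi * c)) := by
      rw [show 2 * Real.pi * (θ + c) = 2 * Real.pi * θ + 2 * Real.pi * c by ring, Real.cos_add]
      ring
    show ((Real.cos (2 * Real.pi * (θ + c)) : ℝ) : ℂ) = _
    rw [h]
    simp only [map_add, _root_.map_mul, MvPolynomial.eval_C, MvPolynomial.eval_X,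
      Matrix.cons_val_zero, Matrix.cons_val_one, Matrix.head_cons]
    push_cast
    ring

lemma good_sin (c : ℝ) : Good 1 (fun θ => ((Real.sin (2 * Real.pi * (θ + c)) : ℝ) : ℂ)) := by
  refine ⟨MvPolynomial.C ((Real.sin (2 * Real.pi * c) : ℝ) : ℂ) * MvPolynomial.X 0
      + MvPolynomial.C ((Real.cos (2 * Real.pi * c) : ℝ) : ℂ) * MvPolynomial.X 1, ?_, ?_⟩
  · refine le_trans (MvPolynomial.totalDegree_add _ _) (max_le ?_ ?_) <;>
      refine le_trans (MvPolynomial.totalDegree_mul _ _) ?_ <;>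
      simp [MvPolynomial.totalDegree_C, MvPolynomial.totalDegree_X]
  · intro θ
    have h : Real.sin (2 * Real.pi * (θ + c))
        = Real.cos (2 * Real.pi * θ) * Real.sin (2 * Real.pi * c)
          + Real.sin (2 * Real.pi * θ) * Real.cos (2 * Real.pi * c) := by
      rw [show 2 * Real.pi * (θ + c) = 2 * Real.pi * θ + 2 * Real.pi * c by ring, Real.sin_add]
      ring
    show ((Real.sin (2 * Real.pi * (θ + c)) : ℝ) : ℂ) = _
    rw [h]
    simp only [map_add, _root_.map_mul, MvPolynomial.eval_C, MvPolynomial.eval_X,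
      Matrix.cons_val_zero, Matrix.cons_val_one, Matrix.head_cons]
    push_cast
    ring

/-! #### Determinant computations -/

variable {N : ℕ}

lemma updateColumn_comm' (M : Matrix (Fin N) (Fin N) ℂ) {j j' : Fin N} (h : j ≠ j')
    (a b : Fin N → ℂ) :
    (M.updateCol j a).updateCol j' b = (M.updateCol j' b).updateCol j a := by
  ext i l
  simp only [Matrix.updateCol_apply]
  by_cases h1 : l = j' <;> by_cases h2 : l = j
  · exact absurd (h2.symm.trans h1) h
  · simp [h1, h2, h, h.symm]
  · simp [h1, h2, h, h.symm]
  · simp [h1, h2, h, h.symm]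

lemma det_dup (M : Matrix (Fin N) (Fin N) ℂ) {j j' : Fin N} (h : j ≠ j') (v : Fin N → ℂ) :
    ((M.updateCol j v).updateCol j' v).det = 0 := by
  refine Matrix.det_zero_of_column_eq h (fun i => ?_)
  simp [Matrix.updateCol_apply, h]

lemma det_swap (M : Matrix (Fin N) (Fin N) ℂ) {j j' : Fin N} (h : j ≠ j') (u v : Fin N → ℂ) :
    ((M.updateCol j u).updateCol j' v).det
      = -((M.updateCol j v).updateCol j' u).det := by
  have key : (M.updateCol j v).updateCol j' u
      = ((M.updateCol j u).updateCol j' v).submatrix id ⇑(Equiv.swap j j') := by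
    ext i l
    simp only [Matrix.submatrix_apply, Matrix.updateCol_apply, id_eq]
    rcases eq_or_ne l j with rfl | h2
    · rw [Equiv.swap_apply_left]
      simp [h, h.symm]
    · rcases eq_or_ne l j' with rfl | h3
      · rw [Equiv.swap_apply_right]
        simp [h, h.symm]
      · rw [Equiv.swap_apply_of_ne_of_ne h2 h3]
        simp [h2, h3]
  rw [key, Matrix.det_permute', Equiv.Perm.sign_swap h]
  simp

lemma det_double_add_left (M : Matrix (Fin N) (Fin N) ℂ) {j j' : Fin N} (h : j ≠ j')
    (a₁ a₂ b : Fin N → ℂ) :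
    ((M.updateCol j (a₁ + a₂)).updateCol j' b).det
      = ((M.updateCol j a₁).updateCol j' b).det
        + ((M.updateCol j a₂).updateCol j' b).det := by
  rw [updateColumn_comm' M h, Matrix.det_updateCol_add,
    ← updateColumn_comm' M h, ← updateColumn_comm' M h]

lemma det_double_smul_left (M : Matrix (Fin N) (Fin N) ℂ) {j j' : Fin N} (h : j ≠ j')
    (r : ℂ) (a b : Fin N → ℂ) :
    ((M.updateCol j (r • a)).updateCol j' b).det
      = r * ((M.updateCol j a).updateCol j' b).det := by
  rw [updateColumn_comm' M h, Matrix.det_updateCol_smul, ← updateColumn_comm' M h]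

/-- The key multilinear expansion: since the quadratic part is proportional to `c² + s² = 1`,
the determinant is affine in `(c, s)`. -/
lemma det_expand (M : Matrix (Fin N) (Fin N) ℂ) {j j' : Fin N} (hne : j ≠ j')
    (w w' u v : Fin N → ℂ) (c s l : ℂ) (hcs : c ^ 2 + s ^ 2 = 1) :
    ((M.updateCol j (w + c • ((-l) • v) + s • ((-l) • u))).updateCol j'
        (w' + c • ((-l) • u) + s • (l • v))).det
      = (((M.updateCol j w).updateCol j' w').det
          + l ^ 2 * ((M.updateCol j v).updateCol j' u).det)
        + c * (((M.updateCol j ((-l) • v)).updateCol j' w').det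
            + ((M.updateCol j w).updateCol j' ((-l) • u)).det)
        + s * (((M.updateCol j ((-l) • u)).updateCol j' w').det
            + ((M.updateCol j w).updateCol j' (l • v)).det) := by
  simp only [Matrix.det_updateCol_add, Matrix.det_updateCol_smul,
    det_double_add_left M hne, det_double_smul_left M hne, det_dup M hne]
  rw [det_swap M hne u v]
  linear_combination (l ^ 2 * ((M.updateCol j v).updateCol j' u).det) * hcs

/-! #### Entries of the CMV matrix -/

lemma Lcol1 (α ρ : ℤ → ℂ) (k a : ℤ) :
    Lmat α ρ a (2 * k + 1)
      = (if a = 2 * k then ρ (2 * k) else if a = 2 * k + 1 then -α (2 * k) else 0) := by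
  unfold Lmat thetaEntry
  by_cases h : a % 2 = 0 % 2
  · rw [if_pos h, if_neg (show ¬(2 * k + 1 : ℤ) = a by omega)]
    by_cases h2 : (2 * k + 1 : ℤ) = a + 1
    · rw [if_pos h2, if_pos (show a = 2 * k by omega)]
      rw [show a = 2 * k by omega]
    · rw [if_neg h2, if_neg (show ¬a = 2 * k by omega),
        if_neg (show ¬a = 2 * k + 1 by omega)]
  · rw [if_neg h, if_neg (show ¬(2 * k + 1 : ℤ) = a - 1 by omega)]
    by_cases h2 : (2 * k + 1 : ℤ) = a
    · rw [if_pos h2, if_neg (show ¬a = 2 * k by omega),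
        if_pos (show a = 2 * k + 1 by omega)]
      rw [show a - 1 = 2 * k by omega]
    · rw [if_neg h2, if_neg (show ¬a = 2 * k by omega),
        if_neg (show ¬a = 2 * k + 1 by omega)]

lemma Lcol2 (α ρ : ℤ → ℂ) (k a : ℤ) :
    Lmat α ρ a (2 * k + 2)
      = (if a = 2 * k + 2 then conj (α (2 * k + 2))
         else if a = 2 * k + 3 then conj (ρ (2 * k + 2)) else 0) := by
  unfold Lmat thetaEntry
  by_cases h : a % 2 = 0 % 2
  · rw [if_pos h]
    by_cases h2 : (2 * k + 2 : ℤ) = a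
    · rw [if_pos h2, if_pos (show a = 2 * k + 2 by omega)]
      rw [show a = 2 * k + 2 by omega]
    · rw [if_neg h2, if_neg (show ¬(2 * k + 2 : ℤ) = a + 1 by omega),
        if_neg (show ¬a = 2 * k + 2 by omega), if_neg (show ¬a = 2 * k + 3 by omega)]
  · rw [if_neg h]
    by_cases h2 : (2 * k + 2 : ℤ) = a - 1
    · rw [if_pos h2, if_neg (show ¬a = 2 * k + 2 by omega),
        if_pos (show a = 2 * k + 3 by omega)]
      rw [show a - 1 = 2 * k + 2 by omega]
    · rw [if_neg h2, if_neg (show ¬(2 * k + 2 : ℤ) = a by omega),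
        if_neg (show ¬a = 2 * k + 2 by omega), if_neg (show ¬a = 2 * k + 3 by omega)]

lemma Wmat_odd_col (α ρ : ℤ → ℂ) (k a : ℤ) :
    Wmat α ρ a (2 * k + 1)
      = (if a = 2 * k then ρ (2 * k) else if a = 2 * k + 1 then -α (2 * k) else 0)
            * conj (α (2 * k + 1))
        + (if a = 2 * k + 2 then conj (α (2 * k + 2))
           else if a = 2 * k + 3 then conj (ρ (2 * k + 2)) else 0) * conj (ρ (2 * k + 1)) := by
  have hIcc : Finset.Icc (2 * k + 1 - 1) (2 * k + 1 + 1) = {2 * k, 2 * k + 1, 2 * k + 2} := by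
    ext x
    simp only [Finset.mem_Icc, Finset.mem_insert, Finset.mem_singleton]
    omega
  have hM0 : Mmat α ρ (2 * k) (2 * k + 1) = 0 := by
    unfold Mmat thetaEntry
    rw [if_neg (show ¬(2 * k : ℤ) % 2 = 1 % 2 by omega),
      if_neg (show ¬(2 * k + 1 : ℤ) = 2 * k - 1 by omega),
      if_neg (show ¬(2 * k + 1 : ℤ) = 2 * k by omega)]
  have hM1 : Mmat α ρ (2 * k + 1) (2 * k + 1) = conj (α (2 * k + 1)) := by
    unfold Mmat thetaEntry
    rw [if_pos (show (2 * k + 1 : ℤ) % 2 = 1 % 2 by omega),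
      if_pos (show (2 * k + 1 : ℤ) = 2 * k + 1 from rfl)]
  have hM2 : Mmat α ρ (2 * k + 2) (2 * k + 1) = conj (ρ (2 * k + 1)) := by
    unfold Mmat thetaEntry
    rw [if_neg (show ¬(2 * k + 2 : ℤ) % 2 = 1 % 2 by omega),
      if_pos (show (2 * k + 1 : ℤ) = 2 * k + 2 - 1 by omega),
      show (2 * k + 2 - 1 : ℤ) = 2 * k + 1 by omega]
  unfold Wmat
  rw [hIcc, Finset.sum_insert (by simp only [Finset.mem_insert, Finset.mem_singleton]; omega), Finset.sum_insert (by simp only [Finset.mem_insert, Finset.mem_singleton]; omega),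
    Finset.sum_singleton, hM0, hM1, hM2, Lcol1, Lcol2]
  ring

lemma Wmat_even_col (α ρ : ℤ → ℂ) (k a : ℤ) :
    Wmat α ρ a (2 * k + 2)
      = (if a = 2 * k then ρ (2 * k) else if a = 2 * k + 1 then -α (2 * k) else 0)
            * ρ (2 * k + 1)
        + (if a = 2 * k + 2 then conj (α (2 * k + 2))
           else if a = 2 * k + 3 then conj (ρ (2 * k + 2)) else 0) * (-α (2 * k + 1)) := by
  have hIcc : Finset.Icc (2 * k + 2 - 1) (2 * k + 2 + 1)
      = {2 * k + 1, 2 * k + 2, 2 * k + 3} := by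
    ext x
    simp only [Finset.mem_Icc, Finset.mem_insert, Finset.mem_singleton]
    omega
  have hM1 : Mmat α ρ (2 * k + 1) (2 * k + 2) = ρ (2 * k + 1) := by
    unfold Mmat thetaEntry
    rw [if_pos (show (2 * k + 1 : ℤ) % 2 = 1 % 2 by omega),
      if_neg (show ¬(2 * k + 2 : ℤ) = 2 * k + 1 by omega),
      if_pos (show (2 * k + 2 : ℤ) = 2 * k + 1 + 1 by omega)]
  have hM2 : Mmat α ρ (2 * k + 2) (2 * k + 2) = -α (2 * k + 1) := by
    unfold Mmat thetaEntry
    rw [if_neg (show ¬(2 * k + 2 : ℤ) % 2 = 1 % 2 by omega),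
      if_neg (show ¬(2 * k + 2 : ℤ) = 2 * k + 2 - 1 by omega),
      if_pos (show (2 * k + 2 : ℤ) = 2 * k + 2 from rfl),
      show (2 * k + 2 - 1 : ℤ) = 2 * k + 1 by omega]
  have hM3 : Mmat α ρ (2 * k + 3) (2 * k + 2) = 0 := by
    unfold Mmat thetaEntry
    rw [if_pos (show (2 * k + 3 : ℤ) % 2 = 1 % 2 by omega),
      if_neg (show ¬(2 * k + 2 : ℤ) = 2 * k + 3 by omega),
      if_neg (show ¬(2 * k + 2 : ℤ) = 2 * k + 3 + 1 by omega)]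
  unfold Wmat
  rw [hIcc, Finset.sum_insert (by simp only [Finset.mem_insert, Finset.mem_singleton]; omega), Finset.sum_insert (by simp only [Finset.mem_insert, Finset.mem_singleton]; omega),
    Finset.sum_singleton, hM1, hM2, hM3, Lcol1, Lcol2]
  ring

/-! #### Values of the Verblunsky coefficients -/

lemma uamoAlpha_even (l1 l2 ω θ : ℝ) (k : ℤ) :
    uamoAlpha l1 l2 ω θ (2 * k) = ((lamp l1 : ℝ) : ℂ) := by
  unfold uamoAlpha
  rw [if_pos (by omega)]

lemma uamoAlpha_even2 (l1 l2 ω θ : ℝ) (k : ℤ) :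
    uamoAlpha l1 l2 ω θ (2 * k + 2) = ((lamp l1 : ℝ) : ℂ) := by
  unfold uamoAlpha
  rw [if_pos (by omega)]

lemma uamoRho_even (l1 l2 ω θ : ℝ) (k : ℤ) :
    uamoRho l1 l2 ω θ (2 * k) = ((l1 : ℝ) : ℂ) := by
  unfold uamoRho
  rw [if_pos (by omega)]

lemma uamoRho_even2 (l1 l2 ω θ : ℝ) (k : ℤ) :
    uamoRho l1 l2 ω θ (2 * k + 2) = ((l1 : ℝ) : ℂ) := by
  unfold uamoRho
  rw [if_pos (by omega)]

lemma uamoAlpha_odd (l1 l2 ω θ : ℝ) (k : ℤ) :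
    uamoAlpha l1 l2 ω θ (2 * k + 1)
      = ((l2 * Real.sin (2 * Real.pi * (θ + (k : ℝ) * ω)) : ℝ) : ℂ) := by
  unfold uamoAlpha
  rw [if_neg (by omega), show ((2 * k + 1 - 1) / 2 : ℤ) = k by omega]

lemma uamoRho_odd (l1 l2 ω θ : ℝ) (k : ℤ) :
    uamoRho l1 l2 ω θ (2 * k + 1)
      = ((l2 * Real.cos (2 * Real.pi * (θ + (k : ℝ) * ω)) : ℝ) : ℂ)
        + Complex.I * ((lamp l2 : ℝ) : ℂ) := by
  unfold uamoRho
  rw [if_neg (by omega), show ((2 * k + 1 - 1) / 2 : ℤ) = k by omega]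

/-! #### The structured form of `zI - W|` -/

/-- The vector `u_k` (the part of the columns of `L` interacting with block `k` of `M`,
rows `2k` and `2k+1`, shifted to `0`-based indices). -/
def uuD (l1 : ℝ) (N : ℕ) (k : ℕ) : Fin N → ℂ := fun i =>
  if (i : ℕ) + 1 = 2 * k then (l1 : ℂ)
  else if (i : ℕ) = 2 * k then -((lamp l1 : ℝ) : ℂ) else 0

/-- The vector `v_k` (rows `2k+2` and `2k+3`, shifted to `0`-based indices). -/
def vvD (l1 : ℝ) (N : ℕ) (k : ℕ) : Fin N → ℂ := fun i =>
  if (i : ℕ) = 2 * k + 1 then ((lamp l1 : ℝ) : ℂ)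
  else if (i : ℕ) = 2 * k + 2 then (l1 : ℂ) else 0

/-- `cos(2π(θ + kω))` as a complex number. -/
def ckD (ω : ℝ) (k : ℕ) (θ : ℝ) : ℂ := ((Real.cos (2 * Real.pi * (θ + (k : ℝ) * ω)) : ℝ) : ℂ)

/-- `sin(2π(θ + kω))` as a complex number. -/
def skD (ω : ℝ) (k : ℕ) (θ : ℝ) : ℂ := ((Real.sin (2 * Real.pi * (θ + (k : ℝ) * ω)) : ℝ) : ℂ)

/-- The constant (θ-independent) part of column `j` of `zI - W|`. -/
def wwD (l1 l2 : ℝ) (z : ℂ) (N : ℕ) (j : Fin N) : Fin N → ℂ := fun i =>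
  (if i = j then z else 0)
    + (if (j : ℕ) % 2 = 0 then Complex.I * ((lamp l2 : ℝ) : ℂ) * vvD l1 N ((j : ℕ) / 2) i
       else -(Complex.I * ((lamp l2 : ℝ) : ℂ) * uuD l1 N ((j : ℕ) / 2) i))

/-- Column `j` of `zI - W|`, in structured (affine in `cos`, `sin`) form. -/
def colD (l1 l2 ω : ℝ) (z : ℂ) (N : ℕ) (θ : ℝ) (j : Fin N) : Fin N → ℂ :=
  if (j : ℕ) % 2 = 0 then
    wwD l1 l2 z N j + ckD ω ((j : ℕ) / 2) θ • ((-(l2 : ℂ)) • vvD l1 N ((j : ℕ) / 2))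
      + skD ω ((j : ℕ) / 2) θ • ((-(l2 : ℂ)) • uuD l1 N ((j : ℕ) / 2))
  else
    wwD l1 l2 z N j + ckD ω ((j : ℕ) / 2) θ • ((-(l2 : ℂ)) • uuD l1 N ((j : ℕ) / 2))
      + skD ω ((j : ℕ) / 2) θ • (((l2 : ℂ)) • vvD l1 N ((j : ℕ) / 2))

/-- Hybrid matrix: the first `2k` columns are those of `zI - W|`, the rest come from `B`. -/
def mixD (l1 l2 ω : ℝ) (z : ℂ) (N : ℕ) (θ : ℝ) (k : ℕ)
    (B : Matrix (Fin N) (Fin N) ℂ) : Matrix (Fin N) (Fin N) ℂ := fun i j =>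
  if (j : ℕ) < 2 * k then colD l1 l2 ω z N θ j i else B i j

lemma ck_sq_add_sk_sq (ω : ℝ) (k : ℕ) (θ : ℝ) : ckD ω k θ ^ 2 + skD ω k θ ^ 2 = 1 := by
  unfold ckD skD
  norm_cast
  exact Real.cos_sq_add_sin_sq _

/-! #### The induction -/

lemma good_det_mix (l1 l2 ω : ℝ) (z : ℂ) (n : ℕ) :
    ∀ k : ℕ, k ≤ n → ∀ B : Matrix (Fin (2 * n)) (Fin (2 * n)) ℂ,
      Good k (fun θ => (mixD l1 l2 ω z (2 * n) θ k B).det) := by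
  intro k
  induction k with
  | zero =>
    intro _ B
    have h : (fun θ => (mixD l1 l2 ω z (2 * n) θ 0 B).det) = fun _ => B.det := by
      funext θ
      have h2 : mixD l1 l2 ω z (2 * n) θ 0 B = B := by
        ext i j
        show (if (j : ℕ) < 2 * 0 then colD l1 l2 ω z (2 * n) θ j i else B i j) = B i j
        rw [if_neg (by omega)]
      rw [h2]
    rw [h]
    exact good_const _
  | succ k IH =>
    intro hk B
    have hkn : k < n := by omega
    set j₀ : Fin (2 * n) := ⟨2 * k, by omega⟩ with hj₀
    set j₁ : Fin (2 * n) := ⟨2 * k + 1, by omega⟩ with hj₁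
    have hv₀ : (j₀ : ℕ) = 2 * k := rfl
    have hv₁ : (j₁ : ℕ) = 2 * k + 1 := rfl
    have hne : j₀ ≠ j₁ := Fin.ne_of_val_ne (by omega)
    have hmix : ∀ θ (C : Matrix (Fin (2 * n)) (Fin (2 * n)) ℂ),
        mixD l1 l2 ω z (2 * n) θ (k + 1) C
          = ((mixD l1 l2 ω z (2 * n) θ k C).updateCol j₀
              (colD l1 l2 ω z (2 * n) θ j₀)).updateCol j₁ (colD l1 l2 ω z (2 * n) θ j₁) := by
      intro θ C
      ext i j
      by_cases h1 : j = j₁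
      · subst h1
        rw [Matrix.updateCol_self]
        show (if ((j₁ : ℕ)) < 2 * (k + 1) then colD l1 l2 ω z (2 * n) θ j₁ i else C i j₁) = _
        rw [if_pos (show ((j₁ : ℕ)) < 2 * (k + 1) by omega)]
      · by_cases h0 : j = j₀
        · subst h0
          rw [Matrix.updateCol_ne h1, Matrix.updateCol_self]
          show (if ((j₀ : ℕ)) < 2 * (k + 1) then colD l1 l2 ω z (2 * n) θ j₀ i else C i j₀) = _
          rw [if_pos (show ((j₀ : ℕ)) < 2 * (k + 1) by omega)]
        · have hn1 : (j : ℕ) ≠ 2 * k + 1 := fun hh => h1 (Fin.ext (by omega))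
          have hn0 : (j : ℕ) ≠ 2 * k := fun hh => h0 (Fin.ext (by omega))
          rw [Matrix.updateCol_ne h1, Matrix.updateCol_ne h0]
          show (if ((j : ℕ)) < 2 * (k + 1) then colD l1 l2 ω z (2 * n) θ j i else C i j)
            = (if ((j : ℕ)) < 2 * k then colD l1 l2 ω z (2 * n) θ j i else C i j)
          rw [if_congr (show ((j : ℕ) < 2 * (k + 1)) ↔ ((j : ℕ) < 2 * k) by omega) rfl rfl]
    have hupd0 : ∀ θ (C : Matrix (Fin (2 * n)) (Fin (2 * n)) ℂ) (g : Fin (2 * n) → ℂ),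
        (mixD l1 l2 ω z (2 * n) θ k C).updateCol j₀ g
          = mixD l1 l2 ω z (2 * n) θ k (C.updateCol j₀ g) := by
      intro θ C g
      ext i j
      by_cases hj : j = j₀
      · subst hj
        rw [Matrix.updateCol_self]
        show _ = (if ((j₀ : ℕ)) < 2 * k then colD l1 l2 ω z (2 * n) θ j₀ i
          else (C.updateCol j₀ g) i j₀)
        rw [if_neg (show ¬((j₀ : ℕ)) < 2 * k by omega), Matrix.updateCol_self]
      · rw [Matrix.updateCol_ne hj]
        show (if ((j : ℕ)) < 2 * k then colD l1 l2 ω z (2 * n) θ j i else C i j)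
          = (if ((j : ℕ)) < 2 * k then colD l1 l2 ω z (2 * n) θ j i
            else (C.updateCol j₀ g) i j)
        by_cases h2 : (j : ℕ) < 2 * k
        · rw [if_pos h2, if_pos h2]
        · rw [if_neg h2, if_neg h2, Matrix.updateCol_ne hj]
    have hupd1 : ∀ θ (C : Matrix (Fin (2 * n)) (Fin (2 * n)) ℂ) (g : Fin (2 * n) → ℂ),
        (mixD l1 l2 ω z (2 * n) θ k C).updateCol j₁ g
          = mixD l1 l2 ω z (2 * n) θ k (C.updateCol j₁ g) := by
      intro θ C g
      ext i j
      by_cases hj : j = j₁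
      · subst hj
        rw [Matrix.updateCol_self]
        show _ = (if ((j₁ : ℕ)) < 2 * k then colD l1 l2 ω z (2 * n) θ j₁ i
          else (C.updateCol j₁ g) i j₁)
        rw [if_neg (show ¬((j₁ : ℕ)) < 2 * k by omega), Matrix.updateCol_self]
      · rw [Matrix.updateCol_ne hj]
        show (if ((j : ℕ)) < 2 * k then colD l1 l2 ω z (2 * n) θ j i else C i j)
          = (if ((j : ℕ)) < 2 * k then colD l1 l2 ω z (2 * n) θ j i
            else (C.updateCol j₁ g) i j)
        by_cases h2 : (j : ℕ) < 2 * k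
        · rw [if_pos h2, if_pos h2]
        · rw [if_neg h2, if_neg h2, Matrix.updateCol_ne hj]
    have hcol0 : ∀ θ, colD l1 l2 ω z (2 * n) θ j₀
        = wwD l1 l2 z (2 * n) j₀ + ckD ω k θ • ((-(l2 : ℂ)) • vvD l1 (2 * n) k)
          + skD ω k θ • ((-(l2 : ℂ)) • uuD l1 (2 * n) k) := by
      intro θ
      unfold colD
      rw [if_pos (show (j₀ : ℕ) % 2 = 0 by omega), show ((j₀ : ℕ) / 2) = k by omega]
    have hcol1 : ∀ θ, colD l1 l2 ω z (2 * n) θ j₁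
        = wwD l1 l2 z (2 * n) j₁ + ckD ω k θ • ((-(l2 : ℂ)) • uuD l1 (2 * n) k)
          + skD ω k θ • (((l2 : ℂ)) • vvD l1 (2 * n) k) := by
      intro θ
      unfold colD
      rw [if_neg (show ¬(j₁ : ℕ) % 2 = 0 by omega), show ((j₁ : ℕ) / 2) = k by omega]
    -- the six constant matrices
    set B₀ := (B.updateCol j₀ (wwD l1 l2 z (2 * n) j₀)).updateCol j₁
      (wwD l1 l2 z (2 * n) j₁) with hB₀
    set B₁ := (B.updateCol j₀ (vvD l1 (2 * n) k)).updateCol j₁ (uuD l1 (2 * n) k) with hB₁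
    set B₂ := (B.updateCol j₀ ((-(l2 : ℂ)) • vvD l1 (2 * n) k)).updateCol j₁
      (wwD l1 l2 z (2 * n) j₁) with hB₂
    set B₃ := (B.updateCol j₀ (wwD l1 l2 z (2 * n) j₀)).updateCol j₁
      ((-(l2 : ℂ)) • uuD l1 (2 * n) k) with hB₃
    set B₄ := (B.updateCol j₀ ((-(l2 : ℂ)) • uuD l1 (2 * n) k)).updateCol j₁
      (wwD l1 l2 z (2 * n) j₁) with hB₄
    set B₅ := (B.updateCol j₀ (wwD l1 l2 z (2 * n) j₀)).updateCol j₁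
      (((l2 : ℂ)) • vvD l1 (2 * n) k) with hB₅
    have heq : (fun θ => (mixD l1 l2 ω z (2 * n) θ (k + 1) B).det)
        = fun θ =>
          ((mixD l1 l2 ω z (2 * n) θ k B₀).det
              + (l2 : ℂ) ^ 2 * (mixD l1 l2 ω z (2 * n) θ k B₁).det)
            + ckD ω k θ * ((mixD l1 l2 ω z (2 * n) θ k B₂).det
                + (mixD l1 l2 ω z (2 * n) θ k B₃).det)
            + skD ω k θ * ((mixD l1 l2 ω z (2 * n) θ k B₄).det
                + (mixD l1 l2 ω z (2 * n) θ k B₅).det) := by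
      funext θ
      rw [hmix θ B, hcol0 θ, hcol1 θ,
        det_expand _ hne _ _ _ _ _ _ _ (ck_sq_add_sk_sq ω k θ)]
      simp only [hupd0, hupd1]
      rfl
    rw [heq]
    have hk' : k ≤ n := by omega
    have G0 := IH hk' B₀
    have G1 := IH hk' B₁
    have G2 := IH hk' B₂
    have G3 := IH hk' B₃
    have G4 := IH hk' B₄
    have G5 := IH hk' B₅
    refine Good.add (Good.add ?_ ?_) ?_
    · exact (G0.add (G1.const_mul _)).mono (by omega)
    · exact ((good_cos ((k : ℝ) * ω)).mul (G2.add G3)).mono (by omega)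
    · exact ((good_sin ((k : ℝ) * ω)).mul (G4.add G5)).mono (by omega)

/-! #### Identification with the CMV determinant -/

lemma colD_apply_even (l1 l2 ω : ℝ) (z : ℂ) (N : ℕ) (θ : ℝ) (j : Fin N) (k : ℕ)
    (hj2 : (j : ℕ) = 2 * k) (i : Fin N) :
    colD l1 l2 ω z N θ j i
      = ((if i = j then z else 0) + Complex.I * ((lamp l2 : ℝ) : ℂ) * vvD l1 N k i)
        + ckD ω k θ * (-(l2 : ℂ) * vvD l1 N k i)
        + skD ω k θ * (-(l2 : ℂ) * uuD l1 N k i) := by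
  have hmod : (j : ℕ) % 2 = 0 := by omega
  have hdiv : (j : ℕ) / 2 = k := by omega
  unfold colD
  rw [if_pos hmod, hdiv]
  simp only [Pi.add_apply, Pi.smul_apply, smul_eq_mul]
  unfold wwD
  rw [if_pos hmod, hdiv]
  try ring

lemma colD_apply_odd (l1 l2 ω : ℝ) (z : ℂ) (N : ℕ) (θ : ℝ) (j : Fin N) (k : ℕ)
    (hj2 : (j : ℕ) = 2 * k + 1) (i : Fin N) :
    colD l1 l2 ω z N θ j i
      = ((if i = j then z else 0) - Complex.I * ((lamp l2 : ℝ) : ℂ) * uuD l1 N k i)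
        + ckD ω k θ * (-(l2 : ℂ) * uuD l1 N k i)
        + skD ω k θ * ((l2 : ℂ) * vvD l1 N k i) := by
  have hmod : ¬(j : ℕ) % 2 = 0 := by omega
  have hdiv : (j : ℕ) / 2 = k := by omega
  unfold colD
  rw [if_neg hmod, hdiv]
  simp only [Pi.add_apply, Pi.smul_apply, smul_eq_mul]
  unfold wwD
  rw [if_neg hmod, hdiv]
  try ring


set_option maxHeartbeats 2000000 in
lemma restr_eq_mix (l1 l2 ω : ℝ) (z : ℂ) (n : ℕ) (θ : ℝ) :
    z • (1 : Matrix (Fin (2 * n)) (Fin (2 * n)) ℂ)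
      - restr (Wmat (uamoAlpha l1 l2 ω θ) (uamoRho l1 l2 ω θ)) 1 (2 * n)
    = mixD l1 l2 ω z (2 * n) θ n 0 := by
  ext i j
  have hj := j.isLt
  have hi := i.isLt
  rcases Nat.even_or_odd (j : ℕ) with ⟨k, hk⟩ | ⟨k, hk⟩
  · -- even `j = 2k`, integer column `2k + 1`
    have hk2 : (j : ℕ) = 2 * k := by omega
    rw [Matrix.sub_apply, Matrix.smul_apply, Matrix.one_apply]
    simp only [restr]
    rw [show (1 : ℤ) + ((j : ℕ) : ℤ) = 2 * (k : ℤ) + 1 by omega]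
    rw [Wmat_odd_col, uamoAlpha_odd, uamoRho_odd, uamoAlpha_even, uamoRho_even,
      uamoAlpha_even2, uamoRho_even2]
    simp only [map_add, _root_.map_mul, Complex.conj_ofReal, Complex.conj_I]
    have hm : mixD l1 l2 ω z (2 * n) θ n 0 i j = colD l1 l2 ω z (2 * n) θ j i := by
      show (if (j : ℕ) < 2 * n then colD l1 l2 ω z (2 * n) θ j i else (0 : Matrix (Fin (2 * n)) (Fin (2 * n)) ℂ) i j) = _
      rw [if_pos hj]
    rw [hm, colD_apply_even l1 l2 ω z (2 * n) θ j k hk2 i]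
    unfold uuD vvD ckD skD
    simp only [Fin.ext_iff, hk2]
    push_cast
    simp only [smul_eq_mul]
    split_ifs <;> first | (exfalso; omega) | ring
  · -- odd `j = 2k + 1`, integer column `2k + 2`
    have hk2 : (j : ℕ) = 2 * k + 1 := by omega
    rw [Matrix.sub_apply, Matrix.smul_apply, Matrix.one_apply]
    simp only [restr]
    rw [show (1 : ℤ) + ((j : ℕ) : ℤ) = 2 * (k : ℤ) + 2 by omega]
    rw [Wmat_even_col, uamoAlpha_odd, uamoRho_odd, uamoAlpha_even, uamoRho_even,
      uamoAlpha_even2, uamoRho_even2]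
    simp only [map_add, _root_.map_mul, Complex.conj_ofReal, Complex.conj_I]
    have hm : mixD l1 l2 ω z (2 * n) θ n 0 i j = colD l1 l2 ω z (2 * n) θ j i := by
      show (if (j : ℕ) < 2 * n then colD l1 l2 ω z (2 * n) θ j i else (0 : Matrix (Fin (2 * n)) (Fin (2 * n)) ℂ) i j) = _
      rw [if_pos hj]
    rw [hm, colD_apply_odd l1 l2 ω z (2 * n) θ j k hk2 i]
    unfold uuD vvD ckD skD
    simp only [Fin.ext_iff, hk2]
    push_cast
    simp only [smul_eq_mul]
    split_ifs <;> first | (exfalso; omega) | ring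

lemma det_dim (A : ℤ → ℤ → ℂ) (z : ℂ) (a : ℤ) {N M : ℕ} (h : N = M) :
    (z • (1 : Matrix (Fin N) (Fin N) ℂ) - restr A a N).det
      = (z • (1 : Matrix (Fin M) (Fin M) ℂ) - restr A a M).det := by
  subst h
  rfl

end UamoAux

/-- Lemma 3.1: `P_{[1,2n],z}(θ)` is a polynomial of `cos(2πθ)` and
`sin(2πθ)` of total degree at most `n`. -/
theorem uamoP_polynomial_cos_sin (l1 l2 ω : ℝ)
    (hl1 : 0 ≤ l1) (hl1' : l1 ≤ 1) (hl2 : 0 ≤ l2) (hl2' : l2 ≤ 1)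
    (z : ℂ) (n : ℕ) (hn : 0 < n) :
    ∃ p : MvPolynomial (Fin 2) ℂ, p.totalDegree ≤ n ∧
      ∀ θ : ℝ, uamoP l1 l2 ω z θ 1 (2 * n)
        = MvPolynomial.eval
            ![((Real.cos (2 * Real.pi * θ) : ℝ) : ℂ), ((Real.sin (2 * Real.pi * θ) : ℝ) : ℂ)]
            p := by
  obtain ⟨p, hdeg, hval⟩ := UamoAux.good_det_mix l1 l2 ω z n n le_rfl 0
  refine ⟨p, hdeg, fun θ => ?_⟩
  have h2 : uamoP l1 l2 ω z θ 1 (2 * n)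
      = (UamoAux.mixD l1 l2 ω z (2 * n) θ n 0).det := by
    unfold uamoP Pdet
    rw [UamoAux.det_dim _ _ _ (show ((2 * (n : ℤ)) - 1 + 1).toNat = 2 * n by omega),
      UamoAux.restr_eq_mix]
  exact h2.trans (hval θ)

end
end

section
/- Fix λ₁,λ₂ ∈ [0,1], ω ∈ ℝ, z ∈ ℂ, and a positive integer n. Then the function θ ↦ P_{[1,2n],z}(θ + 1/4 − (n−1)ω/2) is an even function of θ ∈ ℝ. -/
open Complex Filter ComplexConjugate
noncomputable section

open Complex ComplexConjugate

lemma Lmat_even (α ρ : ℤ → ℂ) (x k : ℤ) (h : x % 2 = 0) :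
    Lmat α ρ x k = if k = x then conj (α x) else if k = x + 1 then ρ x else 0 := by
  simp [Lmat, thetaEntry, h]

lemma Lmat_odd (α ρ : ℤ → ℂ) (x k : ℤ) (h : x % 2 = 1) :
    Lmat α ρ x k = if k = x - 1 then conj (ρ (x - 1)) else if k = x then -α (x - 1) else 0 := by
  simp [Lmat, thetaEntry, h]

lemma Mmat_odd (α ρ : ℤ → ℂ) (x k : ℤ) (h : x % 2 = 1) :
    Mmat α ρ x k = if k = x then conj (α x) else if k = x + 1 then ρ x else 0 := by
  simp [Mmat, thetaEntry, h]

lemma Mmat_even (α ρ : ℤ → ℂ) (x k : ℤ) (h : x % 2 = 0) :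
    Mmat α ρ x k = if k = x - 1 then conj (ρ (x - 1)) else if k = x then -α (x - 1) else 0 := by
  simp [Mmat, thetaEntry, h]

lemma Wmat_closed (α ρ : ℤ → ℂ) (x y : ℤ) :
    Wmat α ρ x y =
      if x % 2 = 0 then
        if y = x - 1 then conj (α x) * conj (ρ (x-1))
        else if y = x then -(conj (α x) * α (x-1))
        else if y = x + 1 then ρ x * conj (α (x+1))
        else if y = x + 2 then ρ x * ρ (x+1)
        else 0
      else
        if y = x - 2 then conj (ρ (x-1)) * conj (ρ (x-2))
        else if y = x - 1 then -(conj (ρ (x-1)) * α (x-2))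
        else if y = x then -(α (x-1) * conj (α x))
        else if y = x + 1 then -(α (x-1) * ρ x)
        else 0 := by
  have hset : Finset.Icc (y-1) (y+1) = {y-1, y, y+1} := by
    ext k; simp only [Finset.mem_Icc, Finset.mem_insert, Finset.mem_singleton]; omega
  rw [Wmat, hset, Finset.sum_insert (by simp only [Finset.mem_insert, Finset.mem_singleton]; omega),
    Finset.sum_insert (by simp only [Finset.mem_singleton]; omega), Finset.sum_singleton]
  rcases Int.emod_two_eq x with hx | hx <;> rcases Int.emod_two_eq y with hy | hy
  · -- x even, y even
    rw [Lmat_even α ρ x (y-1) hx, Lmat_even α ρ x y hx, Lmat_even α ρ x (y+1) hx,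
        Mmat_odd α ρ (y-1) y (by omega), Mmat_even α ρ y y hy, Mmat_odd α ρ (y+1) y (by omega),
        if_pos hx]
    simp only [if_neg (show ¬(y = y-1) by omega), if_pos (show y = y-1+1 by omega),
      eq_self_iff_true, if_true,
      if_neg (show ¬(y = y+1) by omega), if_neg (show ¬(y = y+1+1) by omega),
      if_neg (show ¬(y-1 = x) by omega), if_neg (show ¬(y = x+1) by omega),
      if_neg (show ¬(y = x-1) by omega),
      mul_zero, zero_mul, add_zero, zero_add]
    by_cases h1 : y = x
    · subst h1
      simp only [if_neg (show ¬(y-1 = y+1) by omega), eq_self_iff_true, if_true, zero_mul, zero_add]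
      ring
    · by_cases h2 : y = x + 2
      · subst h2
        simp only [if_pos (show x+2-1 = x+1 by omega), if_neg (show ¬(x+2 = x) by omega),
          eq_self_iff_true, if_true, zero_mul, add_zero]
        ring_nf
      · simp only [if_neg (show ¬(y-1 = x+1) by omega), if_neg h1, if_neg h2, zero_mul, add_zero]
  · -- x even, y odd
    rw [Lmat_even α ρ x (y-1) hx, Lmat_even α ρ x y hx, Lmat_even α ρ x (y+1) hx,
        Mmat_even α ρ (y-1) y (by omega), Mmat_odd α ρ y y hy, Mmat_even α ρ (y+1) y (by omega),
        if_pos hx]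
    simp only [if_neg (show ¬(y = y-1-1) by omega), if_neg (show ¬(y = y-1) by omega),
      eq_self_iff_true, if_true, if_pos (show y = y+1-1 by omega),
      if_neg (show ¬(y = x) by omega), if_neg (show ¬(y+1 = x+1) by omega),
      if_neg (show ¬(y = x) by omega), if_neg (show ¬(y = x+2) by omega),
      mul_zero, zero_mul, add_zero, zero_add]
    by_cases h1 : y = x + 1
    · subst h1
      simp only [eq_self_iff_true, if_true, if_neg (show ¬(x+1 = x-1) by omega),
        if_neg (show ¬(x+1+1 = x) by omega), zero_mul, add_zero]
      try ring
    · by_cases h2 : y = x - 1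
      · subst h2
        simp only [eq_self_iff_true, if_true, if_neg (show ¬(x-1 = x+1) by omega),
          if_pos (show x-1+1 = x by omega), zero_mul, zero_add]
        ring_nf
      · simp only [if_neg h1, if_neg h2, if_neg (show ¬(y+1 = x) by omega), zero_mul, add_zero]
  · -- x odd, y even
    rw [Lmat_odd α ρ x (y-1) hx, Lmat_odd α ρ x y hx, Lmat_odd α ρ x (y+1) hx,
        Mmat_odd α ρ (y-1) y (by omega), Mmat_even α ρ y y hy, Mmat_odd α ρ (y+1) y (by omega),
        if_neg (show ¬(x % 2 = 0) by omega)]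
    simp only [if_neg (show ¬(y = y-1) by omega), if_pos (show y = y-1+1 by omega),
      eq_self_iff_true, if_true,
      if_neg (show ¬(y = y+1) by omega), if_neg (show ¬(y = y+1+1) by omega),
      if_neg (show ¬(y-1 = x-1) by omega), if_neg (show ¬(y = x) by omega),
      if_neg (show ¬(y = x-2) by omega),
      mul_zero, zero_mul, add_zero, zero_add]
    by_cases h1 : y = x + 1
    · subst h1
      simp only [if_pos (show x+1-1 = x by omega), if_neg (show ¬(x+1 = x-1) by omega),
        eq_self_iff_true, if_true, zero_mul, add_zero]
      ring_nf
    · by_cases h2 : y = x - 1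
      · subst h2
        simp only [if_neg (show ¬(x-1-1 = x) by omega), eq_self_iff_true, if_true,
          zero_mul, zero_add]
        ring_nf
      · simp only [if_neg (show ¬(y-1 = x) by omega), if_neg h1, if_neg h2, zero_mul, add_zero]
  · -- x odd, y odd
    rw [Lmat_odd α ρ x (y-1) hx, Lmat_odd α ρ x y hx, Lmat_odd α ρ x (y+1) hx,
        Mmat_even α ρ (y-1) y (by omega), Mmat_odd α ρ y y hy, Mmat_even α ρ (y+1) y (by omega),
        if_neg (show ¬(x % 2 = 0) by omega)]
    simp only [if_neg (show ¬(y = y-1-1) by omega), if_neg (show ¬(y = y-1) by omega),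
      eq_self_iff_true, if_true, if_pos (show y = y+1-1 by omega),
      if_neg (show ¬(y = x-1) by omega), if_neg (show ¬(y+1 = x) by omega),
      if_neg (show ¬(y = x+1) by omega),
      mul_zero, zero_mul, add_zero, zero_add]
    by_cases h1 : y = x
    · subst h1
      simp only [if_neg (show ¬(y = y-2) by omega), eq_self_iff_true, if_true,
        if_neg (show ¬(y+1 = y-1) by omega), zero_mul, add_zero]
      try ring
    · by_cases h2 : y = x - 2
      · subst h2
        simp only [if_neg (show ¬(x-2 = x) by omega), if_pos (show x-2+1 = x-1 by omega),
          eq_self_iff_true, if_true, zero_mul, zero_add]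
        ring_nf
      · simp only [if_neg h1, if_neg h2, if_neg (show ¬(y+1 = x-1) by omega), zero_mul, add_zero]

def epsg (x : ℤ) : ℂ := if x % 4 = 1 ∨ x % 4 = 2 then 1 else -1

lemma epsg_prod_one (x y : ℤ) (h : (x - y) % 4 = 0 ∨ (x + y) % 4 = 3) :
    epsg x * epsg y = 1 := by
  have hx4 : x % 4 = 0 ∨ x % 4 = 1 ∨ x % 4 = 2 ∨ x % 4 = 3 := by omega
  have hy4 : y % 4 = 0 ∨ y % 4 = 1 ∨ y % 4 = 2 ∨ y % 4 = 3 := by omega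
  rcases hx4 with hx|hx|hx|hx <;> rcases hy4 with hy|hy|hy|hy <;>
    simp only [epsg, hx, hy] <;> norm_num <;> omega

lemma epsg_prod_neg (x y : ℤ) (h : ¬((x - y) % 4 = 0 ∨ (x + y) % 4 = 3)) :
    epsg x * epsg y = -1 := by
  have hx4 : x % 4 = 0 ∨ x % 4 = 1 ∨ x % 4 = 2 ∨ x % 4 = 3 := by omega
  have hy4 : y % 4 = 0 ∨ y % 4 = 1 ∨ y % 4 = 2 ∨ y % 4 = 3 := by omega
  rcases hx4 with hx|hx|hx|hx <;> rcases hy4 with hy|hy|hy|hy <;>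
    simp only [epsg, hx, hy] <;> norm_num <;> omega

set_option maxHeartbeats 3200000 in
lemma Wmat_reflect (α β ρ σ : ℤ → ℂ) (w : ℤ) (hw : w % 2 = 0)
    (hα : ∀ k, β k = α (w - k))
    (hαr : ∀ k, conj (α k) = α k)
    (hρe : ∀ k, k % 2 = 0 → σ k = ρ (w - k))
    (hρer : ∀ k, k % 2 = 0 → conj (ρ k) = ρ k)
    (hρo : ∀ k, k % 2 = 1 → σ k = -conj (ρ (w - k)))
    (x y : ℤ) :
    Wmat β σ x y = epsg x * epsg y * Wmat α ρ (w + 1 - x) (w + 1 - y) := by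
  rw [Wmat_closed β σ x y, Wmat_closed α ρ (w + 1 - x) (w + 1 - y)]
  rcases Int.emod_two_eq x with hx | hx
  · by_cases h1 : y = x - 1
    · subst h1
      split_ifs <;> first | (exfalso; omega) |
        (rw [hα x, hαr, hρo (x-1) (by omega)]
         simp only [map_neg, Complex.conj_conj]
         rw [epsg_prod_one x (x-1) (by omega), one_mul]; ring_nf)
    by_cases h2 : y = x
    · subst h2
      split_ifs <;> first | (exfalso; omega) |
        (rw [hα y, hα (y-1)]; simp only [hαr]
         rw [epsg_prod_one y y (by omega), one_mul]; ring_nf)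
    by_cases h3 : y = x + 1
    · subst h3
      split_ifs <;> first | (exfalso; omega) |
        (rw [hρe x hx, hα (x+1), hαr, hρer (w+1-x-1) (by omega)]
         rw [epsg_prod_neg x (x+1) (by omega)]; ring_nf)
    by_cases h4 : y = x + 2
    · subst h4
      split_ifs <;> first | (exfalso; omega) |
        (rw [hρe x hx, hρo (x+1) (by omega), hρer (w+1-x-1) (by omega)]
         rw [epsg_prod_neg x (x+2) (by omega)]; ring_nf)
    · split_ifs <;> first | (exfalso; omega) | ring
  · by_cases h1 : y = x - 2
    · subst h1
      split_ifs <;> first | (exfalso; omega) |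
        (rw [hρe (x-1) (by omega), hρer (w-(x-1)) (by omega), hρo (x-2) (by omega)]
         simp only [map_neg, Complex.conj_conj]
         rw [epsg_prod_neg x (x-2) (by omega)]; ring_nf)
    by_cases h2 : y = x - 1
    · subst h2
      split_ifs <;> first | (exfalso; omega) |
        (rw [hρe (x-1) (by omega), hρer (w-(x-1)) (by omega), hα (x-2), hαr]
         rw [epsg_prod_neg x (x-1) (by omega)]; ring_nf)
    by_cases h3 : y = x
    · subst h3
      split_ifs <;> first | (exfalso; omega) |
        (rw [hα (y-1), hα y]; simp only [hαr]
         rw [epsg_prod_one y y (by omega), one_mul]; ring_nf)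
    by_cases h4 : y = x + 1
    · subst h4
      split_ifs <;> first | (exfalso; omega) |
        (rw [hα (x-1), hρo x hx, hαr]
         rw [epsg_prod_one x (x+1) (by omega), one_mul]; ring_nf)
    · split_ifs <;> first | (exfalso; omega) | ring

lemma sin_half (a b : ℝ) (h : a + b = 1/2) :
    Real.sin (2 * Real.pi * a) = Real.sin (2 * Real.pi * b) := by
  have ha : a = 1/2 - b := by linarith
  rw [ha, show 2 * Real.pi * (1/2 - b) = Real.pi - 2 * Real.pi * b from by ring,
    Real.sin_pi_sub]

lemma cos_half (a b : ℝ) (h : a + b = 1/2) :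
    Real.cos (2 * Real.pi * a) = -Real.cos (2 * Real.pi * b) := by
  have ha : a = 1/2 - b := by linarith
  rw [ha, show 2 * Real.pi * (1/2 - b) = Real.pi - 2 * Real.pi * b from by ring,
    Real.cos_pi_sub]

lemma uamoAlpha_real (l1 l2 ω θ : ℝ) (k : ℤ) :
    conj (uamoAlpha l1 l2 ω θ k) = uamoAlpha l1 l2 ω θ k := by
  unfold uamoAlpha; split_ifs <;> exact Complex.conj_ofReal _

lemma uamoRho_real_even (l1 l2 ω θ : ℝ) (k : ℤ) (hk : k % 2 = 0) :
    conj (uamoRho l1 l2 ω θ k) = uamoRho l1 l2 ω θ k := by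
  unfold uamoRho; rw [if_pos hk]; exact Complex.conj_ofReal _

lemma uamoAlpha_reflect (l1 l2 ω θ : ℝ) (n : ℕ) (k : ℤ) :
    uamoAlpha l1 l2 ω (-θ + 1/4 - ((n:ℝ) - 1) * ω / 2) k
      = uamoAlpha l1 l2 ω (θ + 1/4 - ((n:ℝ) - 1) * ω / 2) (2 * (n:ℤ) - k) := by
  unfold uamoAlpha
  rcases Int.emod_two_eq k with hk | hk
  · rw [if_pos hk, if_pos (show (2 * (n:ℤ) - k) % 2 = 0 by omega)]
  · rw [if_neg (by omega), if_neg (by omega)]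
    have hm : ((2 * (n:ℤ) - k - 1) / 2 : ℤ) = (n:ℤ) - 1 - ((k - 1) / 2) := by omega
    rw [hm]
    refine congrArg Complex.ofReal ?_
    rw [sin_half (-θ + 1/4 - ((n:ℝ) - 1) * ω / 2 + (((k - 1) / 2 : ℤ) : ℝ) * ω)
        (θ + 1/4 - ((n:ℝ) - 1) * ω / 2 + ((((n:ℤ) - 1 - ((k - 1) / 2) : ℤ)) : ℝ) * ω)
        (by push_cast; ring)]

lemma uamoRho_reflect_even (l1 l2 ω θ : ℝ) (n : ℕ) (k : ℤ) (hk : k % 2 = 0) :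
    uamoRho l1 l2 ω (-θ + 1/4 - ((n:ℝ) - 1) * ω / 2) k
      = uamoRho l1 l2 ω (θ + 1/4 - ((n:ℝ) - 1) * ω / 2) (2 * (n:ℤ) - k) := by
  unfold uamoRho
  rw [if_pos hk, if_pos (show (2 * (n:ℤ) - k) % 2 = 0 by omega)]

lemma uamoRho_reflect_odd (l1 l2 ω θ : ℝ) (n : ℕ) (k : ℤ) (hk : k % 2 = 1) :
    uamoRho l1 l2 ω (-θ + 1/4 - ((n:ℝ) - 1) * ω / 2) k
      = -conj (uamoRho l1 l2 ω (θ + 1/4 - ((n:ℝ) - 1) * ω / 2) (2 * (n:ℤ) - k)) := by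
  unfold uamoRho
  rw [if_neg (by omega), if_neg (by omega)]
  have hm : ((2 * (n:ℤ) - k - 1) / 2 : ℤ) = (n:ℤ) - 1 - ((k - 1) / 2) := by omega
  rw [hm]
  have hc := cos_half (-θ + 1/4 - ((n:ℝ) - 1) * ω / 2 + (((k - 1) / 2 : ℤ) : ℝ) * ω)
      (θ + 1/4 - ((n:ℝ) - 1) * ω / 2 + ((((n:ℤ) - 1 - ((k - 1) / 2) : ℤ)) : ℝ) * ω)
      (by push_cast; ring)
  simp only [map_add, map_mul, Complex.conj_ofReal, Complex.conj_I]
  rw [hc]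
  push_cast
  ring

lemma epsg_sq (x : ℤ) : epsg x * epsg x = 1 := by
  unfold epsg; split_ifs <;> norm_num

lemma Pdet_reflect (α β ρ σ : ℤ → ℂ) (w : ℤ) (hw : w % 2 = 0) (hwpos : 0 ≤ w)
    (hα : ∀ k, β k = α (w - k))
    (hαr : ∀ k, conj (α k) = α k)
    (hρe : ∀ k, k % 2 = 0 → σ k = ρ (w - k))
    (hρer : ∀ k, k % 2 = 0 → conj (ρ k) = ρ k)
    (hρo : ∀ k, k % 2 = 1 → σ k = -conj (ρ (w - k)))
    (z : ℂ) :
    Pdet β σ z 1 w = Pdet α ρ z 1 w := by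
  unfold Pdet
  set N := (w - 1 + 1).toNat with hNdef
  have hNw : (N : ℤ) = w := by simp [hNdef]; omega
  set A : Matrix (Fin N) (Fin N) ℂ := restr (Wmat α ρ) 1 N with hA
  set B : Matrix (Fin N) (Fin N) ℂ := restr (Wmat β σ) 1 N with hB
  set d : Fin N → ℂ := fun i => epsg (1 + (i : ℤ)) with hd
  set D : Matrix (Fin N) (Fin N) ℂ := Matrix.diagonal d with hD
  have hrev : ∀ i : Fin N, ((Fin.revPerm i : Fin N) : ℤ) = w - 1 - (i : ℤ) := by
    intro i
    have hi := i.isLt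
    have h1 : (Fin.revPerm i : Fin N) = i.rev := Fin.revPerm_apply i
    rw [h1]
    have h2 := Fin.val_rev i
    omega
  have hDD : D * D = 1 := by
    rw [hD, Matrix.diagonal_mul_diagonal]
    have : (fun i => d i * d i) = fun _ : Fin N => (1 : ℂ) := by
      funext i; exact epsg_sq _
    rw [this, Matrix.diagonal_one]
  have hBDAD : B = D * (A.submatrix Fin.revPerm Fin.revPerm) * D := by
    ext i j
    rw [hB, hD, Matrix.mul_diagonal, Matrix.diagonal_mul, Matrix.submatrix_apply, hA]
    show Wmat β σ (1 + (i:ℤ)) (1 + (j:ℤ)) = _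
    rw [Wmat_reflect α β ρ σ w hw hα hαr hρe hρer hρo (1 + (i:ℤ)) (1 + (j:ℤ))]
    show _ = d i * Wmat α ρ (1 + ((Fin.revPerm i : Fin N) : ℤ)) (1 + ((Fin.revPerm j : Fin N) : ℤ)) * d j
    rw [hrev i, hrev j, hd]
    rw [show w + 1 - (1 + (i:ℤ)) = 1 + (w - 1 - (i:ℤ)) by ring,
        show w + 1 - (1 + (j:ℤ)) = 1 + (w - 1 - (j:ℤ)) by ring]
    ring
  have hsub : z • (1 : Matrix (Fin N) (Fin N) ℂ) - A.submatrix Fin.revPerm Fin.revPerm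
      = (z • (1 : Matrix (Fin N) (Fin N) ℂ) - A).submatrix Fin.revPerm Fin.revPerm := by
    ext i j
    simp only [Matrix.sub_apply, Matrix.smul_apply, Matrix.one_apply, Matrix.submatrix_apply,
      EmbeddingLike.apply_eq_iff_eq]
  have key : z • (1 : Matrix (Fin N) (Fin N) ℂ) - B
      = D * ((z • (1 : Matrix (Fin N) (Fin N) ℂ) - A).submatrix Fin.revPerm Fin.revPerm) * D := by
    rw [hBDAD, ← hsub, Matrix.mul_sub, Matrix.sub_mul, Matrix.mul_smul, Matrix.mul_one,
      Matrix.smul_mul, hDD]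
  rw [key, Matrix.det_mul, Matrix.det_mul, Matrix.det_submatrix_equiv_self]
  have hdet : D.det * D.det = 1 := by rw [← Matrix.det_mul, hDD, Matrix.det_one]
  linear_combination (z • (1 : Matrix (Fin N) (Fin N) ℂ) - A).det * hdet

/-- Lemma 3.2: `θ ↦ P_{[1,2n],z}(θ + 1/4 - (n-1)ω/2)` is even. -/
theorem uamoP_even (l1 l2 ω : ℝ)
    (hl1 : 0 ≤ l1) (hl1' : l1 ≤ 1) (hl2 : 0 ≤ l2) (hl2' : l2 ≤ 1)
    (z : ℂ) (n : ℕ) (hn : 0 < n) :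
    ∀ θ : ℝ, uamoP l1 l2 ω z (θ + 1 / 4 - ((n : ℝ) - 1) * ω / 2) 1 (2 * n)
      = uamoP l1 l2 ω z (-θ + 1 / 4 - ((n : ℝ) - 1) * ω / 2) 1 (2 * n) := by

  intro θ
  unfold uamoP
  refine (Pdet_reflect (uamoAlpha l1 l2 ω (θ + 1 / 4 - ((n : ℝ) - 1) * ω / 2))
    (uamoAlpha l1 l2 ω (-θ + 1 / 4 - ((n : ℝ) - 1) * ω / 2))
    (uamoRho l1 l2 ω (θ + 1 / 4 - ((n : ℝ) - 1) * ω / 2))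
    (uamoRho l1 l2 ω (-θ + 1 / 4 - ((n : ℝ) - 1) * ω / 2))
    (2 * (n:ℤ)) (by omega) (by positivity)
    (fun k => uamoAlpha_reflect l1 l2 ω θ n k)
    (fun k => uamoAlpha_real l1 l2 ω _ k)
    (fun k hk => uamoRho_reflect_even l1 l2 ω θ n k hk)
    (fun k hk => uamoRho_real_even l1 l2 ω _ k hk)
    (fun k hk => uamoRho_reflect_odd l1 l2 ω θ n k hk) z).symm

end
end

section
/- Let (α_k)_{k∈ℤ} and (ρ_k)_{k∈ℤ} be sequences of complex numbers with |α_k|² + |ρ_k|² = 1 and ρ_k ≠ 0 for all k, and let z ∈ ℂ with z ≠ 0. For n ∈ ℤ define B_n = [[1, 0],[−conj(α_{2n}), conj(ρ_{2n})]], the Gesztesy–Zinchenko matrices M_{k,z} = (1/ρ_k)·[[−conj(α_k), z],[z^{−1}, −α_k]] for k odd and M_{k,z} = (1/ρ_k)·[[−α_k, 1],[1, −conj(α_k)]] for k even, and the transfer matrix A_{n,z} = (1/(ρ_{2n}ρ_{2n−1}))·[[z^{−1} + α_{2n}·conj(α_{2n−1}) + α_{2n−1}·conj(α_{2n−2}) +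 α_{2n}·conj(α_{2n−2})·z, −conj(ρ_{2n−2})·α_{2n−1} − conj(ρ_{2n−2})·α_{2n}·z],[−ρ_{2n}·conj(α_{2n−1}) − ρ_{2n}·conj(α_{2n−2})·z, ρ_{2n}·conj(ρ_{2n−2})·z]]. Then for every n ∈ ℤ, A_{n,z} = B_n^{−1} · M_{2n,z} · M_{2n−1,z} · B_{n−1}. -/
open Complex Filter ComplexConjugate
noncomputable section

set_option maxHeartbeats 1000000 in
private lemma transfer_key (a r b s c t z : ℂ) (hr : r ≠ 0) (hs : s ≠ 0) (hz : z ≠ 0)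
    (hu : a * conj a + r * conj r = 1) :
    ((r*s)⁻¹ • !![z⁻¹ + a * conj b + b * conj c + a * conj c * z,
        -(conj t * b) - conj t * a * z;
        -(r * conj b) - r * conj c * z, r * conj t * z] : Matrix (Fin 2) (Fin 2) ℂ)
    = ((conj r)⁻¹ • !![conj r, 0; conj a, 1]) * (r⁻¹ • !![-a, 1; 1, -conj a])
      * (s⁻¹ • !![-conj b, z; z⁻¹, -b]) * !![1, 0; -conj c, conj t] := by
  have hr' : conj r ≠ 0 := by simpa using hr
  simp only [Matrix.smul_mul, Matrix.mul_smul, smul_smul, Matrix.mul_fin_two]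
  ext i j
  fin_cases i <;> fin_cases j <;>
    simp only [Matrix.smul_apply, Matrix.of_apply, Matrix.cons_val', Matrix.cons_val_zero,
      Matrix.cons_val_one, Matrix.head_cons, Matrix.empty_val', Matrix.cons_val_fin_one,
      Matrix.head_fin_const, smul_eq_mul, Fin.isValue, Fin.zero_eta, Fin.mk_one]
  · field_simp
    ring
  · field_simp
    ring
  · field_simp
    linear_combination (-(z * conj b + z ^ 2 * conj c)) * hu
  · field_simp
    linear_combination (conj t * z ^ 2) * hu

private lemma Bmat_inv (α ρ : ℤ → ℂ) (hρ : ∀ k : ℤ, ρ k ≠ 0) (n : ℤ) :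
    (Bmat α ρ n)⁻¹ = (conj (ρ (2 * n)))⁻¹ • !![conj (ρ (2 * n)), 0; conj (α (2 * n)), 1] := by
  have hr : conj (ρ (2 * n)) ≠ 0 := by simpa using hρ (2 * n)
  apply Matrix.inv_eq_left_inv
  simp only [Bmat, Matrix.smul_mul, Matrix.mul_fin_two]
  ext i j
  fin_cases i <;> fin_cases j <;>
    simp only [Matrix.smul_apply, Matrix.of_apply, Matrix.cons_val', Matrix.cons_val_zero,
      Matrix.cons_val_one, Matrix.head_cons, Matrix.empty_val', Matrix.cons_val_fin_one,
      Matrix.head_fin_const, smul_eq_mul, Fin.isValue, Matrix.one_apply, Fin.zero_eta, Fin.mk_one,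
        Matrix.cons_val_zero, Matrix.cons_val_one, Matrix.head_cons, if_true, if_false,
        zero_ne_one, one_ne_zero] <;>
    field_simp <;> ring

/-- equation (3.4) of Section 3: equivalence between the
Gesztesy–Zinchenko cocycle and the transfer matrix cocycle:
`A_{n,z} = B_n⁻¹ M_{2n,z} M_{2n-1,z} B_{n-1}`. -/
theorem transfer_eq_conj_GZ (α ρ : ℤ → ℂ)
    (hunit : ∀ k : ℤ, ‖α k‖ ^ 2 + ‖ρ k‖ ^ 2 = 1)
    (hρ : ∀ k : ℤ, ρ k ≠ 0) (z : ℂ) (hz : z ≠ 0) :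
    ∀ n : ℤ,
      Amat α ρ z n
        = (Bmat α ρ n)⁻¹ * GZmat α ρ z (2 * n) * GZmat α ρ z (2 * n - 1) * Bmat α ρ (n - 1) := by
  intro n
  have hu : α (2 * n) * conj (α (2 * n)) + ρ (2 * n) * conj (ρ (2 * n)) = 1 := by
    have h := hunit (2 * n)
    rw [Complex.sq_norm, Complex.sq_norm] at h
    rw [Complex.mul_conj, Complex.mul_conj]
    exact_mod_cast h
  have h0 : (2 * n) % 2 = 0 := by omega
  have h1 : ¬ ((2 * n - 1) % 2 = 0) := by omega
  have h2 : 2 * (n - 1) = 2 * n - 2 := by ring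
  rw [Bmat_inv α ρ hρ n]
  simp only [GZmat, h0, h1, if_true, if_false, if_pos rfl, Bmat, h2, Amat]
  exact transfer_key (α (2*n)) (ρ (2*n)) (α (2*n-1)) (ρ (2*n-1)) (α (2*n-2)) (ρ (2*n-2)) z
    (hρ (2*n)) (hρ (2*n-1)) hz hu

end
end

section
/- Let (α_k)_{k∈ℤ} and (ρ_k)_{k∈ℤ} be sequences of complex numbers with |α_k|² + |ρ_k|² = 1 and ρ_k ≠ 0 for all k, and let z ∈ ℂ with z ≠ 0. Let S_{k,z} = (1/|ρ_k|)·[[z, −conj(α_k)],[−α_k·z, 1]], let M_{k,z} = (1/ρ_k)·[[−conj(α_k), z],[z^{−1}, −α_k]] for k odd and M_{k,z} = (1/ρ_k)·[[−α_k, 1],[1, −conj(α_k)]] for k even, and let R = [[0,1],[1,0]]. Then for every odd integer n, M_{n+1,z}·M_{n,z} = ( |ρ_n ρ_{n+1}| / (z·ρ_n·ρ_{n+1}) ) · R^{−1} · S_{n+1,z} · S_{n,z} · R, and moreover M_{n+1,z}·M_{n,z} = (1/(ρ_{n+1}ρ_n))·[[conj(α_n)·α_{n+1} + z^{−1}, −α_n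 − α_{n+1}·z],[−conj(α_n) − conj(α_{n+1})·z^{−1}, α_n·conj(α_{n+1}) + z]]. -/
open Complex Filter ComplexConjugate
noncomputable section

/-- equation (2.7)-(2.8), from [DFLY]: for odd `n`, the two-step
Gesztesy–Zinchenko matrix equals a conjugate-rescaled two-step Szegő matrix, and has
the displayed explicit form. -/
theorem GZ_two_step_eq_Szego (α ρ : ℤ → ℂ)
    (hunit : ∀ k : ℤ, ‖α k‖ ^ 2 + ‖ρ k‖ ^ 2 = 1)
    (hρ : ∀ k : ℤ, ρ k ≠ 0) (z : ℂ) (hz : z ≠ 0) (n : ℤ) (hn : Odd n) :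
    GZmat α ρ z (n + 1) * GZmat α ρ z n
      = (((‖ρ n * ρ (n + 1)‖ : ℝ) : ℂ) / (z * ρ n * ρ (n + 1))) •
          ((!![0, 1; 1, 0] : Matrix (Fin 2) (Fin 2) ℂ)⁻¹
            * SzegoMat α ρ z (n + 1) * SzegoMat α ρ z n * !![0, 1; 1, 0])
    ∧ GZmat α ρ z (n + 1) * GZmat α ρ z n
      = (ρ (n + 1) * ρ n)⁻¹ •
          !![conj (α n) * α (n + 1) + z⁻¹, -α n - α (n + 1) * z;
             -conj (α n) - conj (α (n + 1)) * z⁻¹, α n * conj (α (n + 1)) + z] := by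
  obtain ⟨m, hm⟩ := hn
  have hn2 : n % 2 ≠ 0 := by omega
  have hn12 : (n + 1) % 2 = 0 := by omega
  have hρ1 := hρ n
  have hρ2 := hρ (n + 1)
  have ha1 : ((‖ρ n‖ : ℝ) : ℂ) ≠ 0 := by
    exact_mod_cast norm_ne_zero_iff.mpr (hρ n)
  have ha2 : ((‖ρ (n+1)‖ : ℝ) : ℂ) ≠ 0 := by
    exact_mod_cast norm_ne_zero_iff.mpr (hρ (n+1))
  have habs : ((‖ρ n * ρ (n + 1)‖ : ℝ) : ℂ)
      = ((‖ρ n‖ : ℝ) : ℂ) * ((‖ρ (n+1)‖ : ℝ) : ℂ) := by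
    rw [norm_mul, Complex.ofReal_mul]
  have hR : (!![0, 1; 1, 0] : Matrix (Fin 2) (Fin 2) ℂ)⁻¹ = !![0, 1; 1, 0] := by
    apply Matrix.inv_eq_left_inv
    ext i j; fin_cases i <;> fin_cases j <;>
      simp [Matrix.mul_apply, Fin.sum_univ_two]
  have h2 : GZmat α ρ z (n + 1) * GZmat α ρ z n
      = (ρ (n + 1) * ρ n)⁻¹ •
          !![conj (α n) * α (n + 1) + z⁻¹, -α n - α (n + 1) * z;
             -conj (α n) - conj (α (n + 1)) * z⁻¹, α n * conj (α (n + 1)) + z] := by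
    unfold GZmat
    simp only [hn12, if_pos rfl, if_neg hn2, ↓reduceIte]
    ext i j
    fin_cases i <;> fin_cases j <;>
      simp only [Matrix.mul_apply, Fin.sum_univ_two, Matrix.smul_apply,
        Matrix.cons_val_zero, Matrix.cons_val_one, Matrix.head_cons, Matrix.head_fin_const,
        Matrix.cons_val', Matrix.empty_val', Matrix.cons_val_fin_one, smul_eq_mul,
        Fin.isValue, Fin.zero_eta, Fin.mk_one, Matrix.of_apply] <;>
      field_simp <;> ring
  refine ⟨h2.trans ?_, h2⟩
  rw [hR, habs]
  unfold SzegoMat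
  simp only [Matrix.smul_mul, Matrix.mul_smul, smul_smul]
  have hsc : ((‖ρ n‖ : ℝ) : ℂ) * ((‖ρ (n+1)‖ : ℝ) : ℂ) / (z * ρ n * ρ (n + 1)) *
      ((((‖ρ n‖ : ℝ) : ℂ))⁻¹ * (((‖ρ (n+1)‖ : ℝ) : ℂ))⁻¹)
      = (z * ρ n * ρ (n + 1))⁻¹ := by
    have h1 : ((‖ρ n‖ : ℝ) : ℂ) * ((‖ρ (n+1)‖ : ℝ) : ℂ) / (z * ρ n * ρ (n + 1)) *
        ((((‖ρ n‖ : ℝ) : ℂ))⁻¹ * (((‖ρ (n+1)‖ : ℝ) : ℂ))⁻¹)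
        = (((‖ρ n‖ : ℝ) : ℂ) * (((‖ρ n‖ : ℝ) : ℂ))⁻¹) *
          ((((‖ρ (n+1)‖ : ℝ) : ℂ)) * ((((‖ρ (n+1)‖ : ℝ) : ℂ)))⁻¹) / (z * ρ n * ρ (n + 1)) := by
      ring
    rw [h1, mul_inv_cancel₀ ha1, mul_inv_cancel₀ ha2, one_mul, one_div]
  rw [hsc]
  ext i j
  fin_cases i <;> fin_cases j <;>
    simp only [Matrix.mul_apply, Fin.sum_univ_two, Matrix.smul_apply,
      Matrix.cons_val_zero, Matrix.cons_val_one, Matrix.head_cons, Matrix.head_fin_const,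
      Matrix.cons_val', Matrix.empty_val', Matrix.cons_val_fin_one, smul_eq_mul,
      Fin.isValue, Fin.zero_eta, Fin.mk_one, Matrix.of_apply] <;>
    field_simp <;> ring

end
end

section
/- Let ω ∈ ℝ∖ℚ and let g : 𝕋 → ℂ be continuous with ln|g| ∈ L¹(𝕋). Then for every ε > 0 there exists N such that for all integers a ≤ b with b − a ≥ N and all θ ∈ 𝕋, ∏_{j=a}^{b} |g(θ + jω)| ≤ exp( (b − a + 1)·( ∫_𝕋 ln|g(θ')| dθ' + ε ) ). -/
open Complex Filter ComplexConjugate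
noncomputable section

open MeasureTheory Finset

def GoodC (ω : ℝ) (q : C(AddCircle (1:ℝ), ℂ)) : Prop :=
  ∀ δ : ℝ, 0 < δ → ∃ N : ℕ, ∀ n : ℕ, N ≤ n → ∀ θ : ℝ,
    ‖(∑ j ∈ Finset.range n, q ((θ + j * ω : ℝ) : AddCircle (1:ℝ)))
      - n * ∫ t in (0:ℝ)..1, q ((t : ℝ) : AddCircle (1:ℝ))‖ ≤ δ * n

lemma contQ (q : C(AddCircle (1:ℝ), ℂ)) : Continuous fun t : ℝ => q ((t : ℝ) : AddCircle (1:ℝ)) :=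
  q.continuous.comp (AddCircle.continuous_mk' 1)

lemma goodC_zero (ω : ℝ) : GoodC ω 0 := by
  intro δ hδ
  exact ⟨0, fun n _ θ => by simp [mul_nonneg hδ.le n.cast_nonneg]⟩

lemma goodC_add (ω : ℝ) (p q : C(AddCircle (1:ℝ), ℂ)) (hp : GoodC ω p) (hq : GoodC ω q) :
    GoodC ω (p + q) := by
  intro δ hδ
  obtain ⟨N₁, h₁⟩ := hp (δ/2) (by positivity)
  obtain ⟨N₂, h₂⟩ := hq (δ/2) (by positivity)
  refine ⟨max N₁ N₂, fun n hn θ => ?_⟩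
  have e1 := h₁ n (le_trans (le_max_left _ _) hn) θ
  have e2 := h₂ n (le_trans (le_max_right _ _) hn) θ
  have hint : ∫ t in (0:ℝ)..1, (p + q) ((t : ℝ) : AddCircle (1:ℝ))
      = (∫ t in (0:ℝ)..1, p ((t : ℝ) : AddCircle (1:ℝ)))
        + ∫ t in (0:ℝ)..1, q ((t : ℝ) : AddCircle (1:ℝ)) := by
    simp only [ContinuousMap.add_apply]
    exact intervalIntegral.integral_add ((contQ p).intervalIntegrable 0 1)
      ((contQ q).intervalIntegrable 0 1)
  have key : (∑ j ∈ Finset.range n, (p + q) ((θ + j * ω : ℝ) : AddCircle (1:ℝ)))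
      - n * ∫ t in (0:ℝ)..1, (p + q) ((t : ℝ) : AddCircle (1:ℝ))
      = ((∑ j ∈ Finset.range n, p ((θ + j * ω : ℝ) : AddCircle (1:ℝ)))
          - n * ∫ t in (0:ℝ)..1, p ((t : ℝ) : AddCircle (1:ℝ)))
        + ((∑ j ∈ Finset.range n, q ((θ + j * ω : ℝ) : AddCircle (1:ℝ)))
          - n * ∫ t in (0:ℝ)..1, q ((t : ℝ) : AddCircle (1:ℝ))) := by
    rw [hint]; simp only [ContinuousMap.add_apply, Finset.sum_add_distrib]; ring
  rw [key]
  calc ‖_ + _‖ ≤ _ := norm_add_le _ _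
    _ ≤ δ/2 * n + δ/2 * n := add_le_add e1 e2
    _ = δ * n := by ring

lemma goodC_smul (ω : ℝ) (c : ℂ) (q : C(AddCircle (1:ℝ), ℂ)) (hq : GoodC ω q) :
    GoodC ω (c • q) := by
  intro δ hδ
  rcases eq_or_ne c 0 with rfl | hc
  · simpa using goodC_zero ω δ hδ
  obtain ⟨N, h⟩ := hq (δ / ‖c‖) (div_pos hδ (norm_pos_iff.mpr hc))
  refine ⟨N, fun n hn θ => ?_⟩
  have hint : ∫ t in (0:ℝ)..1, (c • q) ((t : ℝ) : AddCircle (1:ℝ))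
      = c • ∫ t in (0:ℝ)..1, q ((t : ℝ) : AddCircle (1:ℝ)) := by
    simp only [ContinuousMap.smul_apply]
    exact intervalIntegral.integral_smul c _
  have key : (∑ j ∈ Finset.range n, (c • q) ((θ + j * ω : ℝ) : AddCircle (1:ℝ)))
      - n * ∫ t in (0:ℝ)..1, (c • q) ((t : ℝ) : AddCircle (1:ℝ))
      = c * ((∑ j ∈ Finset.range n, q ((θ + j * ω : ℝ) : AddCircle (1:ℝ)))
          - n * ∫ t in (0:ℝ)..1, q ((t : ℝ) : AddCircle (1:ℝ))) := by
    rw [hint]; simp only [ContinuousMap.smul_apply, smul_eq_mul]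
    rw [← Finset.mul_sum]; ring
  rw [key, norm_mul]
  calc ‖c‖ * ‖_‖ ≤ ‖c‖ * (δ / ‖c‖ * n) := by
        exact mul_le_mul_of_nonneg_left (h n hn θ) (norm_nonneg c)
    _ = δ * n := by
        have h0 : ‖c‖ ≠ 0 := norm_ne_zero_iff.mpr hc
        field_simp

lemma fourier_integral_zero (k : ℤ) (hk : k ≠ 0) :
    (∫ t in (0:ℝ)..1, (fourier k : C(AddCircle (1:ℝ), ℂ)) ((t : ℝ) : AddCircle (1:ℝ))) = 0 := by
  have hc : (2 * (Real.pi:ℂ) * I * k) ≠ 0 := by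
    simp [Real.pi_ne_zero, I_ne_zero, hk]
  have he : ∀ t : ℝ, (fourier k : C(AddCircle (1:ℝ), ℂ)) ((t : ℝ) : AddCircle (1:ℝ))
      = Complex.exp ((2 * (Real.pi:ℂ) * I * k) * t) := by
    intro t
    rw [fourier_coe_apply]
    norm_num
  simp_rw [he]
  rw [integral_exp_mul_complex hc]
  have h1 : (2 * (Real.pi:ℂ) * I * k) * ((1:ℝ):ℂ) = (k:ℂ) * (2 * (Real.pi:ℂ) * I) := by
    push_cast; ring
  have h0 : (2 * (Real.pi:ℂ) * I * k) * ((0:ℝ):ℂ) = 0 := by push_cast; ring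
  rw [h1, h0, Complex.exp_int_mul_two_pi_mul_I, Complex.exp_zero, sub_self, zero_div]

lemma fourier_sum_eq (ω θ : ℝ) (k : ℤ) (n : ℕ) :
    (∑ j ∈ Finset.range n, (fourier k : C(AddCircle (1:ℝ), ℂ)) ((θ + j * ω : ℝ) : AddCircle (1:ℝ)))
      = Complex.exp ((2 * (Real.pi:ℂ) * I * k) * θ)
        * ∑ j ∈ Finset.range n, (Complex.exp ((2 * (Real.pi:ℂ) * I * k) * ω)) ^ j := by
  rw [Finset.mul_sum]
  refine Finset.sum_congr rfl fun j _ => ?_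
  rw [fourier_coe_apply]
  rw [← Complex.exp_nat_mul, ← Complex.exp_add]
  congr 1
  push_cast
  ring

lemma goodC_fourier (ω : ℝ) (hω : Irrational ω) (k : ℤ) : GoodC ω (fourier k) := by
  rcases eq_or_ne k 0 with rfl | hk
  · intro δ hδ
    refine ⟨0, fun n _ θ => ?_⟩
    simp only [fourier_zero]
    rw [intervalIntegral.integral_const]
    simp [mul_nonneg hδ.le n.cast_nonneg]
  · intro δ hδ
    set z : ℂ := Complex.exp ((2 * (Real.pi:ℂ) * I * k) * ω) with hz
    have hz1 : z ≠ 1 := by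
      intro h
      have hrw : ((2 * (Real.pi:ℂ) * I * k) * ω) = ((k * ω : ℝ):ℂ) * (2 * (Real.pi:ℂ) * I) := by
        push_cast; ring
      rw [hz, hrw, Complex.exp_eq_one_iff] at h
      obtain ⟨m, hm⟩ := h
      have h2 : (2 * (Real.pi:ℂ) * I) ≠ 0 := by
        simp [Real.pi_ne_zero, I_ne_zero]
      have : ((k * ω : ℝ):ℂ) = (m:ℂ) := mul_right_cancel₀ h2 hm
      have : ((k:ℝ) * ω) = (m:ℝ) := by exact_mod_cast this
      exact (hω.intCast_mul hk).ne_int m this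
    have hznorm : ‖z‖ = 1 := by
      have hrw : ((2 * (Real.pi:ℂ) * I * k) * ω) = ((2 * Real.pi * k * ω : ℝ):ℂ) * I := by
        push_cast; ring
      rw [hz, hrw]; exact Complex.norm_exp_ofReal_mul_I _
    have hd : (0:ℝ) < ‖z - 1‖ := by
      rw [norm_pos_iff]; exact sub_ne_zero.mpr hz1
    set C : ℝ := 2 / ‖z - 1‖ with hC
    refine ⟨⌈C / δ⌉₊ + 1, fun n hn θ => ?_⟩
    rw [fourier_integral_zero k hk, mul_zero, sub_zero, fourier_sum_eq, norm_mul]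
    have h1 : ‖Complex.exp ((2 * (Real.pi:ℂ) * I * k) * θ)‖ = 1 := by
      have hrw : ((2 * (Real.pi:ℂ) * I * k) * θ) = ((2 * Real.pi * k * θ : ℝ):ℂ) * I := by
        push_cast; ring
      rw [hrw]; exact Complex.norm_exp_ofReal_mul_I _
    rw [h1, one_mul, geom_sum_eq hz1, norm_div]
    have h2 : ‖z ^ n - 1‖ ≤ 2 := by
      calc ‖z ^ n - 1‖ ≤ ‖z ^ n‖ + ‖(1:ℂ)‖ := norm_sub_le _ _
        _ = 2 := by
          rw [norm_pow]
          show ‖z‖ ^ n + _ = _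
          rw [hznorm]; norm_num
    calc ‖z ^ n - 1‖ / ‖z - 1‖ ≤ 2 / ‖z - 1‖ := by
          gcongr
      _ ≤ δ * n := by
          have h3 : C / δ ≤ (⌈C / δ⌉₊ : ℝ) := Nat.le_ceil _
          have h4 : ((⌈C / δ⌉₊ + 1 : ℕ) : ℝ) ≤ (n : ℝ) := by exact_mod_cast hn
          have : C ≤ δ * n := by
            rw [div_le_iff₀ hδ] at h3
            calc C ≤ (⌈C / δ⌉₊ : ℝ) * δ := h3
              _ ≤ n * δ := by
                apply mul_le_mul_of_nonneg_right _ hδ.le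
                push_cast at h4 ⊢; linarith
              _ = δ * n := mul_comm _ _
          exact this

lemma goodC_span (ω : ℝ) (hω : Irrational ω) (p : C(AddCircle (1:ℝ), ℂ))
    (hp : p ∈ Submodule.span ℂ (Set.range (@fourier 1))) : GoodC ω p := by
  induction hp using Submodule.span_induction with
  | mem x hx => obtain ⟨k, rfl⟩ := hx; exact goodC_fourier ω hω k
  | zero => exact goodC_zero ω
  | add x y _ _ hx hy => exact goodC_add ω x y hx hy
  | smul c x _ hx => exact goodC_smul ω c x hx

lemma uniform_birkhoff (ω : ℝ) (hω : Irrational ω) (h : ℝ → ℝ) (hc : Continuous h)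
    (hper : Function.Periodic h 1) (δ : ℝ) (hδ : 0 < δ) :
    ∃ N : ℕ, ∀ n : ℕ, N ≤ n → ∀ θ : ℝ,
      |(∑ j ∈ Finset.range n, h (θ + j * ω)) - n * ∫ t in (0:ℝ)..1, h t| ≤ δ * n := by
  have Hcont : Continuous hper.lift := hc.quotient_liftOn' _
  set Hc : C(AddCircle (1:ℝ), ℂ) :=
    ⟨fun x => ((hper.lift x : ℝ) : ℂ), Complex.continuous_ofReal.comp Hcont⟩ with hHc
  have hmem : Hc ∈ closure ((Submodule.span ℂ (Set.range (@fourier 1))) : Set C(AddCircle (1:ℝ), ℂ)) := by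
    rw [← Submodule.topologicalClosure_coe, span_fourier_closure_eq_top]
    trivial
  obtain ⟨p, hpmem, hpdist⟩ := Metric.mem_closure_iff.mp hmem (δ/3) (by positivity)
  obtain ⟨N, hN⟩ := goodC_span ω hω p hpmem (δ/3) (by positivity)
  refine ⟨N, fun n hn θ => ?_⟩
  have hcoe : ∀ t : ℝ, Hc ((t : ℝ) : AddCircle (1:ℝ)) = ((h t : ℝ) : ℂ) := by
    intro t; simp [hHc, hper.lift_coe]
  have hdist : ‖Hc - p‖ < δ/3 := by rwa [← dist_eq_norm]
  have hptwise : ∀ x : AddCircle (1:ℝ), ‖Hc x - p x‖ ≤ δ/3 := fun x =>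
    le_trans (ContinuousMap.norm_coe_le_norm (Hc - p) x) hdist.le
  set S : ℂ := ∑ j ∈ Finset.range n, Hc ((θ + j * ω : ℝ) : AddCircle (1:ℝ)) with hS
  set Sp : ℂ := ∑ j ∈ Finset.range n, p ((θ + j * ω : ℝ) : AddCircle (1:ℝ)) with hSp
  set Iq : ℂ := ∫ t in (0:ℝ)..1, Hc ((t : ℝ) : AddCircle (1:ℝ)) with hIq
  set Ip : ℂ := ∫ t in (0:ℝ)..1, p ((t : ℝ) : AddCircle (1:ℝ)) with hIp
  have e1 : ‖S - Sp‖ ≤ δ/3 * n := by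
    rw [hS, hSp, ← Finset.sum_sub_distrib]
    calc ‖∑ j ∈ Finset.range n, (Hc ((θ + j * ω : ℝ) : AddCircle (1:ℝ))
            - p ((θ + j * ω : ℝ) : AddCircle (1:ℝ)))‖
        ≤ ∑ j ∈ Finset.range n, ‖Hc ((θ + j * ω : ℝ) : AddCircle (1:ℝ))
            - p ((θ + j * ω : ℝ) : AddCircle (1:ℝ))‖ := norm_sum_le _ _
      _ ≤ ∑ j ∈ Finset.range n, (δ/3) := Finset.sum_le_sum fun j _ => hptwise _
      _ = δ/3 * n := by rw [Finset.sum_const, Finset.card_range, nsmul_eq_mul, mul_comm]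
  have e2 : ‖Sp - n * Ip‖ ≤ δ/3 * n := hN n hn θ
  have e3 : ‖(n : ℂ) * Ip - n * Iq‖ ≤ δ/3 * n := by
    rw [← mul_sub, norm_mul]
    have : ‖Ip - Iq‖ ≤ δ/3 := by
      rw [hIp, hIq, ← intervalIntegral.integral_sub ((contQ p).intervalIntegrable 0 1)
        ((contQ Hc).intervalIntegrable 0 1)]
      have := intervalIntegral.norm_integral_le_of_norm_le_const (a := 0) (b := 1) (C := δ/3)
        (f := fun t => p ((t : ℝ) : AddCircle (1:ℝ)) - Hc ((t : ℝ) : AddCircle (1:ℝ)))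
        (fun x _ => by rw [norm_sub_rev]; exact hptwise _)
      simpa using this
    calc ‖(n:ℂ)‖ * ‖Ip - Iq‖ ≤ (n : ℝ) * (δ/3) := by
          apply mul_le_mul _ this (norm_nonneg _) n.cast_nonneg
          simp
      _ = δ/3 * n := mul_comm _ _
  have hSreal : S = (((∑ j ∈ Finset.range n, h (θ + j * ω)) : ℝ) : ℂ) := by
    rw [hS]; push_cast; exact Finset.sum_congr rfl fun j _ => hcoe _
  have hIqreal : Iq = (((∫ t in (0:ℝ)..1, h t) : ℝ) : ℂ) := by
    rw [hIq]
    simp_rw [hcoe]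
    exact intervalIntegral.integral_ofReal
  have key : (((∑ j ∈ Finset.range n, h (θ + j * ω)) - n * ∫ t in (0:ℝ)..1, h t : ℝ) : ℂ)
      = (S - Sp) + (Sp - n * Ip) + ((n : ℂ) * Ip - n * Iq) := by
    rw [hSreal, hIqreal]; push_cast; ring
  have : |(∑ j ∈ Finset.range n, h (θ + j * ω)) - n * ∫ t in (0:ℝ)..1, h t|
      = ‖(S - Sp) + (Sp - n * Ip) + ((n : ℂ) * Ip - n * Iq)‖ := by
    rw [← key, Complex.norm_real, Real.norm_eq_abs]
  rw [this]
  calc ‖_ + _ + _‖ ≤ ‖(S - Sp) + (Sp - n * Ip)‖ + ‖(n : ℂ) * Ip - n * Iq‖ := norm_add_le _ _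
    _ ≤ (‖S - Sp‖ + ‖Sp - n * Ip‖) + ‖(n : ℂ) * Ip - n * Iq‖ := by
        gcongr; exact norm_add_le _ _
    _ ≤ (δ/3 * n + δ/3 * n) + δ/3 * n := by gcongr
    _ = δ * n := by ring

def trunc_aux (g : ℝ → ℂ) (M : ℕ) (t : ℝ) : ℝ :=
  Real.log (max (‖g t‖) (Real.exp (-(M:ℝ))))

lemma trunc_aux_pos (g : ℝ → ℂ) (M : ℕ) (t : ℝ) :
    0 < max (‖g t‖) (Real.exp (-(M:ℝ))) :=
  lt_of_lt_of_le (Real.exp_pos _) (le_max_right _ _)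

lemma trunc_aux_cont (g : ℝ → ℂ) (hcont : Continuous g) (M : ℕ) : Continuous (trunc_aux g M) :=
  ((continuous_norm.comp hcont).max continuous_const).log fun t =>
    ne_of_gt (trunc_aux_pos g M t)

lemma trunc_aux_antitone (g : ℝ → ℂ) {M M' : ℕ} (h : M ≤ M') (t : ℝ) :
    trunc_aux g M' t ≤ trunc_aux g M t := by
  apply Real.log_le_log (trunc_aux_pos g M' t)
  exact max_le_max le_rfl (Real.exp_le_exp.mpr (by exact_mod_cast neg_le_neg (Nat.cast_le.mpr h)))

lemma trunc_aux_ge (g : ℝ → ℂ) (M : ℕ) (t : ℝ) (hg : g t ≠ 0) :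
    Real.log (‖g t‖) ≤ trunc_aux g M t :=
  Real.log_le_log (by simpa using hg) (le_max_left _ _)

lemma exists_trunc_aux_integral_le (g : ℝ → ℂ) (hcont : Continuous g)
    (hint : IntervalIntegrable (fun t => Real.log (‖g t‖)) volume 0 1)
    (ε : ℝ) (hε : 0 < ε) :
    ∃ M : ℕ, (∫ t in (0:ℝ)..1, trunc_aux g M t)
      ≤ (∫ t in (0:ℝ)..1, Real.log (‖g t‖)) + ε := by
  set Z : Set ℝ := {t | g t = 0} with hZ
  have hZmeas : MeasurableSet Z := (isClosed_eq hcont continuous_const).measurableSet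
  by_cases hZ0 : volume (Z ∩ Set.Ioc (0:ℝ) 1) = 0
  · -- dominated convergence
    have hlim : Filter.Tendsto (fun M => ∫ t in (0:ℝ)..1, trunc_aux g M t) Filter.atTop
        (nhds (∫ t in (0:ℝ)..1, Real.log (‖g t‖))) := by
      apply intervalIntegral.tendsto_integral_filter_of_dominated_convergence
        (bound := fun t => |Real.log (‖g t‖)| + |trunc_aux g 1 t|)
      · exact Filter.Eventually.of_forall fun M =>
          ((trunc_aux_cont g hcont M).aestronglyMeasurable).restrict
      · have hae : ∀ᵐ x ∂(volume : Measure ℝ), x ∈ Set.uIoc (0:ℝ) 1 → g x ≠ 0 := by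
          rw [Set.uIoc_of_le zero_le_one]
          rw [MeasureTheory.ae_iff]
          convert hZ0 using 2
          ext x
          simp only [Set.mem_setOf_eq, Set.mem_inter_iff, not_forall, hZ]
          tauto
        filter_upwards [Filter.eventually_ge_atTop 1] with M hM
        filter_upwards [hae] with x hx hmem
        have hgx := hx hmem
        have h1 : Real.log (‖g x‖) ≤ trunc_aux g M x := trunc_aux_ge g M x hgx
        have h2 : trunc_aux g M x ≤ trunc_aux g 1 x := trunc_aux_antitone g hM x
        rw [Real.norm_eq_abs, abs_le]
        constructor
        · calc -(|Real.log (‖g x‖)| + |trunc_aux g 1 x|)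
              ≤ -|Real.log (‖g x‖)| := by
                have := abs_nonneg (trunc_aux g 1 x); linarith
            _ ≤ Real.log (‖g x‖) := neg_abs_le _
            _ ≤ trunc_aux g M x := h1
        · calc trunc_aux g M x ≤ trunc_aux g 1 x := h2
            _ ≤ |trunc_aux g 1 x| := le_abs_self _
            _ ≤ _ := by have := abs_nonneg (Real.log (‖g x‖)); linarith
      · exact hint.abs.add ((trunc_aux_cont g hcont 1).intervalIntegrable 0 1).abs
      · have hae : ∀ᵐ x ∂(volume : Measure ℝ), x ∈ Set.uIoc (0:ℝ) 1 → g x ≠ 0 := by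
          rw [Set.uIoc_of_le zero_le_one]
          rw [MeasureTheory.ae_iff]
          convert hZ0 using 2
          ext x
          simp only [Set.mem_setOf_eq, Set.mem_inter_iff, not_forall, hZ]
          tauto
        filter_upwards [hae] with x hx hmem
        have hgx : (0:ℝ) < ‖g x‖ := by simpa using hx hmem
        have : ∀ᶠ M : ℕ in Filter.atTop, trunc_aux g M x = Real.log (‖g x‖) := by
          have htends : Filter.Tendsto (fun M : ℕ => Real.exp (-(M:ℝ))) Filter.atTop (nhds 0) := by
            apply Real.tendsto_exp_atBot.comp
            exact Filter.tendsto_neg_atBot_iff.mpr tendsto_natCast_atTop_atTop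
          filter_upwards [htends.eventually (eventually_le_nhds hgx)] with M hM
          unfold trunc_aux
          rw [max_eq_left hM]
        exact Filter.Tendsto.congr' (this.mono fun M hM => hM.symm) tendsto_const_nhds
    have := hlim.eventually (eventually_le_nhds (lt_add_of_pos_right _ hε))
    obtain ⟨M, hM⟩ := this.exists
    exact ⟨M, hM⟩
  · -- positive measure zero set: integral tends to -infinity
    set c : ℝ := (volume (Z ∩ Set.Ioc (0:ℝ) 1)).toReal with hc
    have hcfin : volume (Z ∩ Set.Ioc (0:ℝ) 1) ≤ 1 := by
      calc volume (Z ∩ Set.Ioc (0:ℝ) 1) ≤ volume (Set.Ioc (0:ℝ) 1) :=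
            measure_mono Set.inter_subset_right
        _ = 1 := by simp
    have hcpos : 0 < c := by
      rw [hc]
      apply ENNReal.toReal_pos hZ0 (lt_of_le_of_lt hcfin ENNReal.one_lt_top).ne
    set C0 : ℝ := ∫ t in Set.Ioc (0:ℝ) 1, |trunc_aux g 1 t| with hC0
    obtain ⟨M, hM⟩ := exists_nat_ge ((C0 - ((∫ t in (0:ℝ)..1, Real.log (‖g t‖)) + ε)) / c)
    refine ⟨max M 1, ?_⟩
    set K : ℕ := max M 1 with hK
    have hint1 : IntegrableOn (trunc_aux g K) (Set.Ioc (0:ℝ) 1) volume :=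
      (trunc_aux_cont g hcont K).integrableOn_Ioc
    have hint1' : IntegrableOn (fun t => |trunc_aux g 1 t|) (Set.Ioc (0:ℝ) 1) volume :=
      ((trunc_aux_cont g hcont 1).abs).integrableOn_Ioc
    have hsplit : (∫ t in Set.Ioc (0:ℝ) 1 ∩ Z, trunc_aux g K t)
        + (∫ t in Set.Ioc (0:ℝ) 1 \ Z, trunc_aux g K t) = ∫ t in Set.Ioc (0:ℝ) 1, trunc_aux g K t :=
      integral_inter_add_diff hZmeas hint1
    have hZpart : (∫ t in Set.Ioc (0:ℝ) 1 ∩ Z, trunc_aux g K t) = -(K:ℝ) * c := by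
      have heq : Set.EqOn (trunc_aux g K) (fun _ => -(K:ℝ)) (Set.Ioc (0:ℝ) 1 ∩ Z) := by
        intro x hx
        have hgx : g x = 0 := hx.2
        simp only [trunc_aux, hgx, norm_zero]
        rw [max_eq_right (Real.exp_pos _).le, Real.log_exp]
      rw [setIntegral_congr_fun (measurableSet_Ioc.inter hZmeas) heq]
      rw [setIntegral_const]
      rw [Set.inter_comm, hc]
      simp [mul_comm, Measure.real]
    have hCpart : (∫ t in Set.Ioc (0:ℝ) 1 \ Z, trunc_aux g K t) ≤ C0 := by
      have h1 : (∫ t in Set.Ioc (0:ℝ) 1 \ Z, trunc_aux g K t)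
          ≤ ∫ t in Set.Ioc (0:ℝ) 1 \ Z, |trunc_aux g 1 t| := by
        apply setIntegral_mono (hint1.mono_set Set.diff_subset)
          (hint1'.mono_set Set.diff_subset)
        intro x
        calc trunc_aux g K x ≤ trunc_aux g 1 x := trunc_aux_antitone g (le_max_right M 1) x
          _ ≤ |trunc_aux g 1 x| := le_abs_self _
      refine h1.trans ?_
      apply setIntegral_mono_set hint1'
      · exact Filter.Eventually.of_forall fun x => abs_nonneg _
      · exact HasSubset.Subset.eventuallyLE Set.diff_subset
    have hMK : ((M:ℝ)) ≤ (K:ℝ) := by exact_mod_cast le_max_left M 1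
    have hbound : C0 - (K:ℝ) * c ≤ (∫ t in (0:ℝ)..1, Real.log (‖g t‖)) + ε := by
      rw [div_le_iff₀ hcpos] at hM
      nlinarith [hM, hcpos]
    calc (∫ t in (0:ℝ)..1, trunc_aux g K t)
        = ∫ t in Set.Ioc (0:ℝ) 1, trunc_aux g K t := intervalIntegral.integral_of_le zero_le_one
      _ = (∫ t in Set.Ioc (0:ℝ) 1 ∩ Z, trunc_aux g K t)
          + (∫ t in Set.Ioc (0:ℝ) 1 \ Z, trunc_aux g K t) := hsplit.symm
      _ ≤ -(K:ℝ) * c + C0 := by rw [hZpart]; linarith [hCpart]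
      _ = C0 - (K:ℝ) * c := by ring
      _ ≤ _ := hbound



/-- Remark after Lemma 2.2, equation (2.5): for continuous `g` with
`ln|g| ∈ L¹(𝕋)`, products `∏_{j=a}^b |g(θ+jω)|` are bounded by
`e^{(b-a+1)(∫ ln|g| + ε)}` once `b - a` is large, uniformly in `θ`. -/
theorem scalar_product_upper_bound (ω : ℝ) (hω : Irrational ω) (g : ℝ → ℂ)
    (hcont : Continuous g) (hper : ∀ θ : ℝ, g (θ + 1) = g θ)
    (hint : IntervalIntegrable (fun t => Real.log (‖g t‖))
      MeasureTheory.volume 0 1) :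
    ∀ ε : ℝ, 0 < ε → ∃ N : ℕ, ∀ a b : ℤ, (N : ℤ) ≤ b - a → ∀ θ : ℝ,
      (∏ j ∈ Finset.Icc a b, ‖g (θ + (j : ℝ) * ω)‖)
        ≤ Real.exp (((b : ℝ) - (a : ℝ) + 1) *
            ((∫ t in (0:ℝ)..1, Real.log (‖g t‖)) + ε)) := by
  intro ε hε
  obtain ⟨M, hM⟩ := exists_trunc_aux_integral_le g hcont hint (ε/2) (by positivity)
  have htper : Function.Periodic (trunc_aux g M) 1 := by
    intro t; unfold trunc_aux; rw [hper t]
  obtain ⟨N, hN⟩ := uniform_birkhoff ω hω (trunc_aux g M) (trunc_aux_cont g hcont M) htper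
    (ε/2) (by positivity)
  refine ⟨N, fun a b hab θ => ?_⟩
  set n : ℕ := (b - a + 1).toNat with hn
  have hnz : (n : ℤ) = b - a + 1 := by omega
  have hNn : N ≤ n := by omega
  have step1 : (∏ j ∈ Finset.Icc a b, ‖g (θ + (j : ℝ) * ω)‖)
      ≤ ∏ j ∈ Finset.Icc a b, max (‖g (θ + (j : ℝ) * ω)‖) (Real.exp (-(M:ℝ))) := by
    apply Finset.prod_le_prod (fun j _ => (norm_nonneg _)) (fun j _ => le_max_left _ _)
  have step2 : (∏ j ∈ Finset.Icc a b, max (‖g (θ + (j : ℝ) * ω)‖) (Real.exp (-(M:ℝ))))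
      = Real.exp (∑ j ∈ Finset.Icc a b, trunc_aux g M (θ + (j : ℝ) * ω)) := by
    rw [Real.exp_sum]
    exact Finset.prod_congr rfl fun j _ => (Real.exp_log (trunc_aux_pos g M _)).symm
  have hmap : Finset.Icc a b
      = Finset.map ⟨fun i : ℕ => a + i, by have hi : Function.Injective (fun i : ℕ => a + (i : ℤ)) := fun i j h => (by exact_mod_cast add_left_cancel h); exact hi⟩ (Finset.range n) := by
    ext x
    simp only [Finset.mem_Icc, Finset.mem_map, Finset.mem_range, Function.Embedding.coeFn_mk]
    constructor
    · intro hx; exact ⟨(x - a).toNat, by omega, by omega⟩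
    · rintro ⟨i, hi, rfl⟩; omega
  have step3 : (∑ j ∈ Finset.Icc a b, trunc_aux g M (θ + (j : ℝ) * ω))
      = ∑ i ∈ Finset.range n, trunc_aux g M ((θ + (a:ℝ) * ω) + (i:ℝ) * ω) := by
    rw [hmap, Finset.sum_map]
    exact Finset.sum_congr rfl fun i _ => by
      simp only [Function.Embedding.coeFn_mk]
      congr 1
      push_cast
      ring
  have step4 : (∑ i ∈ Finset.range n, trunc_aux g M ((θ + (a:ℝ) * ω) + (i:ℝ) * ω))
      ≤ n * ((∫ t in (0:ℝ)..1, trunc_aux g M t) + ε/2) := by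
    have := hN n hNn (θ + (a:ℝ) * ω)
    rw [abs_le] at this
    nlinarith [this.2]
  have hcast : ((n : ℝ)) = (b:ℝ) - (a:ℝ) + 1 := by
    have h2 := congrArg (fun z : ℤ => (z : ℝ)) hnz
    push_cast at h2
    exact h2
  calc (∏ j ∈ Finset.Icc a b, ‖g (θ + (j : ℝ) * ω)‖)
      ≤ Real.exp (∑ j ∈ Finset.Icc a b, trunc_aux g M (θ + (j : ℝ) * ω)) := by
        rw [← step2]; exact step1
    _ ≤ Real.exp (((b : ℝ) - (a : ℝ) + 1) *
          ((∫ t in (0:ℝ)..1, Real.log (‖g t‖)) + ε)) := by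
        apply Real.exp_le_exp.mpr
        rw [step3]
        refine step4.trans ?_
        rw [hcast]
        have hn0 : (0:ℝ) ≤ (b:ℝ) - (a:ℝ) + 1 := by rw [← hcast]; positivity
        have : (∫ t in (0:ℝ)..1, trunc_aux g M t) + ε/2
            ≤ (∫ t in (0:ℝ)..1, Real.log (‖g t‖)) + ε := by linarith
        exact mul_le_mul_of_nonneg_left this hn0

end
end
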